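/- arXiv:2202.04057 — 4 statements merged into one kernel-verified Lean document; each statement's English description precedes it below -/
import Mathlib

section
/- Let p be an odd prime, d₃ = p^{α₃}·d₃′ and d₄ = p^{α₄}·d₄′ positive integers with p ∤ d₃′, p ∤ d₄′ and α₃ ≤ α₄, and m = p^R·m′ a positive integer with p ∤ m′. Set ε = 1 if p ≡ 1 (mod 4) and ε = −1 if p ≡ 3 (mod 4). If R < 2α₃, then the sequence r ↦ N_{d₃,d₄}(p^r; m)/p^{3r} converges (as r → ∞) to 1 + (1 − p^{−1})·(⌊R/2⌋ + ε·⌊(R+1)/2⌋) − p^{−1} if R is odd, and to 1 + (1 − p^{−1})·(⌊R/2⌋ + ε·⌊(R+1)/2⌋) − ε·p^{−1} if R is even. -/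
open Filter

/-- The number of quadruples `(x₁, x₂, x₃, x₄) ∈ (ℤ/p^rℤ)⁴` with
`x₁² + x₂² + d₃²x₃² + d₄²x₄² ≡ m (mod p^r)`. -/
noncomputable def quaternaryLocalCount (p r d₃ d₄ : ℕ) (m : ℤ) : ℕ :=
  Nat.card {v : Fin 4 → ZMod (p ^ r) //
    v 0 ^ 2 + v 1 ^ 2 + (d₃ : ZMod (p ^ r)) ^ 2 * v 2 ^ 2
      + (d₄ : ZMod (p ^ r)) ^ 2 * v 3 ^ 2 = (m : ZMod (p ^ r))}

/-!
For `r > R` every value `m − d₃²x₃² − d₄²x₄²` is `p^R` times a unit, since `p^(2α₃)` divides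
`d₃²` and `d₄²` and `2α₃ > R`. So each of the `p^(2r)` choices of `(x₃, x₄)` leaves an equation
`x² + y² = p^R w` with `w` a unit modulo `p^r`, which has `p^(r-1) · c(R)` solutions whatever `w`
is, and the ratio equals `c(R) / p` for all large `r`. Primitive solutions (one coordinate a unit)
lift uniquely in that coordinate by Hensel's lemma (`p` odd), so there are `p^(r-1)` times as many
as modulo `p`: `p − ε` for a nonzero right-hand side and `(p − 1)(1 + ε)` for zero. An imprimitive
solution is `p · (a, b)` with `a² + b² ≡ p^(R-2) w (mod p^(r-2))`. Hence `c(0) = p − ε`,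
`c(1) = (p − 1)(1 + ε)` and `c(R + 2) = c(R) + (p − 1)(1 + ε)`.
-/

open Finset

section AddMonoidHom

variable {G H : Type*} [AddGroup G] [Fintype G] [AddGroup H] [DecidableEq H]

theorem AddMonoidHom.card_filter_mem_eq (f : G →+ H) {s : Finset H}
    (hs : (s : Set H) ⊆ Set.range f) : #{g | f g ∈ s} = #s * #{g | f g = 0} := by
  have hmaps : Set.MapsTo f ({g | f g ∈ s} : Finset G) s := fun g hg => (mem_filter.mp hg).2
  rw [card_eq_sum_card_fiberwise hmaps, ← smul_eq_mul, ← sum_const]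
  refine sum_congr rfl fun h hh => ?_
  rw [filter_filter]
  have hfib : ∀ g, f g ∈ s ∧ f g = h ↔ f g = h := fun g => ⟨And.right, fun e => ⟨e ▸ hh, e⟩⟩
  simp_rw [hfib]
  exact AddMonoidHom.card_fiber_eq_of_mem_range f (hs hh) ⟨0, map_zero f⟩

theorem AddMonoidHom.card_filter_eq_zero_mul_card (f : G →+ H) [Fintype H]
    (hf : Function.Surjective f) : #{g | f g = 0} * Fintype.card H = Fintype.card G := by
  have := f.card_filter_mem_eq (s := univ) (by simp [hf.range_eq])
  simpa [mul_comm] using this.symm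

theorem AddMonoidHom.card_filter_prodMap_eq_zero {G' H' : Type*} [AddGroup G'] [Fintype G']
    [AddGroup H'] [DecidableEq H'] (f : G →+ H) (f' : G' →+ H') :
    #{z | f.prodMap f' z = 0} = #{g | f g = 0} * #{g' | f' g' = 0} := by
  rw [← card_product]
  congr 1
  ext z
  simp [Prod.ext_iff]

end AddMonoidHom

namespace ZMod

theorem ringHom_apply_eq_val {n : ℕ} [NeZero n] {S : Type*} [NonAssocRing S] (f : ZMod n →+* S)
    (x : ZMod n) : f x = x.val := by
  conv_lhs => rw [← natCast_zmod_val x]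
  exact map_natCast f _

theorem ringHom_eq_zero_iff {n m : ℕ} [NeZero n] (f : ZMod n →+* ZMod m) (x : ZMod n) :
    f x = 0 ↔ m ∣ x.val := by
  rw [ringHom_apply_eq_val, natCast_eq_zero_iff]

variable {p : ℕ} [Fact p.Prime]

theorem isUnit_iff_residue_ne_zero {n : ℕ} (ρ : ZMod (p ^ n) →+* ZMod p) (x : ZMod (p ^ n)) :
    IsUnit x ↔ ρ x ≠ 0 := by
  refine ⟨fun hx => (hx.map ρ).ne_zero, fun hx => ?_⟩
  rw [Ne, ringHom_eq_zero_iff, ← (Fact.out : p.Prime).coprime_iff_not_dvd, Nat.coprime_comm] at hx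
  rw [← natCast_zmod_val x, isUnit_iff_coprime]
  exact hx.pow_right n

theorem isUnit_ringHom_iff {n m : ℕ} (hm : m ≠ 0) (f : ZMod (p ^ n) →+* ZMod (p ^ m))
    {x : ZMod (p ^ n)} : IsUnit (f x) ↔ IsUnit x := by
  let ρ := castHom (dvd_pow_self p hm) (ZMod p)
  rw [isUnit_iff_residue_ne_zero ρ, isUnit_iff_residue_ne_zero (ρ.comp f), RingHom.comp_apply]

theorem isUnit_two_of_ne_two (hp2 : p ≠ 2) {n : ℕ} (hn : n ≠ 0) : IsUnit (2 : ZMod (p ^ n)) := by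
  rw [isUnit_iff_residue_ne_zero (castHom (dvd_pow_self p hn) (ZMod p)), map_ofNat]
  exact Ring.two_ne_zero (by rwa [ringChar_zmod_n])

theorem not_isUnit_iff_exists_eq_mul {n : ℕ} (hn : n ≠ 0) {x : ZMod (p ^ n)} :
    ¬IsUnit x ↔ ∃ a, x = p * a := by
  constructor
  · intro hx
    have hdvd : p ∣ x.val := by
      by_contra hdvd
      rw [← (Fact.out : p.Prime).coprime_iff_not_dvd, Nat.coprime_comm] at hdvd
      exact hx (by rw [← natCast_zmod_val x, isUnit_iff_coprime]; exact hdvd.pow_right n)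
    obtain ⟨c, hc⟩ := hdvd
    exact ⟨c, by rw [← natCast_zmod_val x, hc, Nat.cast_mul]⟩
  · rintro ⟨a, rfl⟩
    rw [isUnit_iff_residue_ne_zero (castHom (dvd_pow_self p hn) (ZMod p)), map_mul, map_natCast,
      natCast_self, zero_mul, ne_eq, not_not]

theorem mul_eq_zero_of_ringHom_eq_zero {n m : ℕ} (hnm : n ≤ 2 * m)
    (f : ZMod (p ^ n) →+* ZMod (p ^ m)) {x y : ZMod (p ^ n)} (hx : f x = 0) (hy : f y = 0) :
    x * y = 0 := by
  rw [ringHom_eq_zero_iff] at hx hy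
  rw [← natCast_zmod_val x, ← natCast_zmod_val y, ← Nat.cast_mul, natCast_eq_zero_iff]
  exact (pow_dvd_pow p (by omega : n ≤ m + m)).trans (pow_add p m m ▸ mul_dvd_mul hx hy)

theorem pow_mul_eq_zero_iff {m j : ℕ} (f : ZMod (p ^ (m + j)) →+* ZMod (p ^ m))
    (x : ZMod (p ^ (m + j))) : (p : ZMod (p ^ (m + j))) ^ j * x = 0 ↔ f x = 0 := by
  rw [ringHom_eq_zero_iff, ← natCast_zmod_val x, ← Nat.cast_pow, ← Nat.cast_mul,
    natCast_eq_zero_iff, val_natCast, Nat.mod_eq_of_lt x.val_lt]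
  generalize x.val = v
  rw [pow_add, mul_comm (p ^ m), Nat.mul_dvd_mul_iff_left (pow_pos (Fact.out : p.Prime).pos j)]

theorem card_filter_ringHom_eq_zero {m j : ℕ} (f : ZMod (p ^ (m + j)) →+* ZMod (p ^ m)) :
    #{x | f x = 0} = p ^ j := by
  have h := (f : ZMod (p ^ (m + j)) →+ ZMod (p ^ m)).card_filter_eq_zero_mul_card
    (ringHom_surjective f)
  rw [card, card] at h
  exact Nat.eq_of_mul_eq_mul_right (pow_pos (Fact.out : p.Prime).pos m)
    (h.trans (by rw [← pow_add, add_comm]))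

theorem card_filter_natCast_mul_eq_zero {m : ℕ} :
    #{x : ZMod (p ^ (m + 1)) | (p : ZMod (p ^ (m + 1))) * x = 0} = p := by
  let f : ZMod (p ^ (m + 1)) →+* ZMod (p ^ m) := castHom (pow_dvd_pow p m.le_succ) _
  have h := (card_filter_ringHom_eq_zero (j := 1) f).trans (pow_one p)
  refine .trans (congrArg Finset.card (filter_congr fun x _ => ?_)) h
  simpa using pow_mul_eq_zero_iff (j := 1) f x

end ZMod

section SqAddSq

variable {R : Type*} [CommRing R] [Fintype R] [DecidableEq R]

def sqAddSqSols (t : R) : Finset (R × R) := {z | z.1 ^ 2 + z.2 ^ 2 = t}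

/- In `ZMod (p ^ n)` the non-units are the multiples of `p`, so these are the primitive
solutions. -/
open Classical in
def primSqAddSqSols (t : R) : Finset (R × R) := {z ∈ sqAddSqSols t | IsUnit z.1 ∨ IsUnit z.2}

def imprimSqAddSqSols (t : R) : Finset (R × R) := sqAddSqSols t \ primSqAddSqSols t

@[simp]
theorem mem_sqAddSqSols {t : R} {z : R × R} : z ∈ sqAddSqSols t ↔ z.1 ^ 2 + z.2 ^ 2 = t := by
  simp [sqAddSqSols]

@[simp]
theorem mem_primSqAddSqSols {t : R} {z : R × R} :
    z ∈ primSqAddSqSols t ↔ z.1 ^ 2 + z.2 ^ 2 = t ∧ (IsUnit z.1 ∨ IsUnit z.2) := by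
  simp [primSqAddSqSols]

@[simp]
theorem mem_imprimSqAddSqSols {t : R} {z : R × R} :
    z ∈ imprimSqAddSqSols t ↔ z.1 ^ 2 + z.2 ^ 2 = t ∧ ¬IsUnit z.1 ∧ ¬IsUnit z.2 := by
  simp only [imprimSqAddSqSols, Finset.mem_sdiff, mem_sqAddSqSols, mem_primSqAddSqSols]
  tauto

theorem card_sqAddSqSols_eq (t : R) :
    #(sqAddSqSols t) = #(primSqAddSqSols t) + #(imprimSqAddSqSols t) := by
  have hsub : primSqAddSqSols t ⊆ sqAddSqSols t := filter_subset _ _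
  rw [imprimSqAddSqSols, add_comm, card_sdiff_add_card_eq_card hsub]

theorem sum_card_sqAddSqSols : ∑ t : R, #(sqAddSqSols t) = Fintype.card R ^ 2 := by
  rw [sq, ← Fintype.card_prod, ← card_univ]
  exact (card_eq_sum_card_fiberwise fun _ _ => mem_coe.mpr (mem_univ _)).symm

theorem card_primSqAddSqSols_map_equiv {S : Type*} [CommRing S] [Fintype S] [DecidableEq S]
    (e : R ≃+* S) (t : R) : #(primSqAddSqSols (e t)) = #(primSqAddSqSols t) := by
  refine (card_equiv (e.toEquiv.prodCongr e.toEquiv) fun z => ?_).symm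
  simp only [mem_primSqAddSqSols, Equiv.prodCongr_apply, Prod.map_fst, Prod.map_snd,
    RingEquiv.toEquiv_eq_coe, EquivLike.coe_coe, ← map_pow, ← map_add, e.injective.eq_iff,
    isUnit_map_iff]

end SqAddSq

theorem card_filter_fst_eq_apply_snd {α β : Type*} [Fintype α] [Fintype β] [DecidableEq α]
    (f : β → α) : #{z : α × β | z.1 = f z.2} = Fintype.card β := by
  rw [← card_univ]
  exact card_nbij' Prod.snd (fun y => (f y, y)) (fun _ _ => mem_coe.mpr (mem_univ _))
    (fun y _ => by simp) (fun z hz => by simp_all [Prod.ext_iff]) (fun _ _ => rfl)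

section Field

variable {F : Type*} [Field F] [Fintype F] [DecidableEq F]

/- The bijection is multiplication by the Gaussian integer `a + b i`. -/
theorem card_sqAddSqSols_sq_add_sq_mul {a b : F} (hab : a ^ 2 + b ^ 2 ≠ 0) (t : F) :
    #(sqAddSqSols ((a ^ 2 + b ^ 2) * t)) = #(sqAddSqSols t) := by
  have hN : (a ^ 2 + b ^ 2) * (a ^ 2 + b ^ 2)⁻¹ = 1 := mul_inv_cancel₀ hab
  refine card_nbij' (fun z => ((a * z.1 + b * z.2) * (a ^ 2 + b ^ 2)⁻¹,
      (a * z.2 - b * z.1) * (a ^ 2 + b ^ 2)⁻¹))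
    (fun z => (a * z.1 - b * z.2, a * z.2 + b * z.1)) (fun z hz => ?_) (fun z hz => ?_)
    (fun z _ => ?_) (fun z _ => ?_) <;> simp only [mem_coe, mem_sqAddSqSols] at *
  · linear_combination ((a ^ 2 + b ^ 2)⁻¹ ^ 2 * (a ^ 2 + b ^ 2)) * hz
      + t * ((a ^ 2 + b ^ 2) * (a ^ 2 + b ^ 2)⁻¹ + 1) * hN
  · linear_combination (a ^ 2 + b ^ 2) * hz
  · ext
    · linear_combination z.1 * hN
    · linear_combination z.2 * hN
  · ext
    · linear_combination z.1 * hN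
    · linear_combination z.2 * hN

theorem sqAddSqSols_zero_of_not_isSquare (h : ¬IsSquare (-1 : F)) : sqAddSqSols (0 : F) = {0} := by
  ext z
  simp only [mem_sqAddSqSols, mem_singleton]
  refine ⟨fun hz => ?_, fun hz => by simp [hz]⟩
  have h2 : z.2 = 0 := by
    by_contra h2
    exact h ⟨z.1 / z.2, by field_simp; linear_combination -hz⟩
  have h1 : z.1 = 0 := pow_eq_zero_iff two_ne_zero |>.mp (by simpa [h2] using hz)
  exact Prod.ext h1 h2

theorem card_sqAddSqSols_zero_add_one (h2 : (2 : F) ≠ 0) (h : IsSquare (-1 : F)) :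
    #(sqAddSqSols (0 : F)) + 1 = 2 * Fintype.card F := by
  obtain ⟨i, hi⟩ := h
  have hi0 : i ≠ 0 := by rintro rfl; simp at hi
  let L : F → Finset (F × F) := fun c => {z | z.1 = c * z.2}
  have hS : sqAddSqSols (0 : F) = L i ∪ L (-i) := by
    ext z
    simp only [L, mem_sqAddSqSols, mem_union, mem_filter_univ]
    rw [← sub_eq_zero (b := i * z.2), ← sub_eq_zero (b := -i * z.2), ← mul_eq_zero]
    constructor <;> intro hz
    · linear_combination hz + z.2 ^ 2 * hi
    · linear_combination hz - z.2 ^ 2 * hi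
  have hI : L i ∩ L (-i) = {0} := by
    ext z
    simp only [L, mem_inter, mem_filter_univ, mem_singleton]
    refine ⟨fun ⟨hpos, hneg⟩ => ?_, fun hz => by simp [hz]⟩
    have hz2 : z.2 = 0 := by
      have : 2 * i * z.2 = 0 := by linear_combination hneg - hpos
      simpa [h2, hi0] using this
    exact Prod.ext (by simp [hpos, hz2]) hz2
  have := card_union_add_card_inter (L i) (L (-i))
  rw [← hS, hI, card_singleton, card_filter_fst_eq_apply_snd, card_filter_fst_eq_apply_snd] at this
  omega

theorem primSqAddSqSols_of_ne_zero {t : F} (ht : t ≠ 0) : primSqAddSqSols t = sqAddSqSols t := by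
  refine filter_true_of_mem fun z hz => ?_
  simp only [isUnit_iff_ne_zero, ← not_and_or]
  rintro ⟨h1, h2⟩
  exact ht (by simpa [h1, h2] using (mem_sqAddSqSols.mp hz).symm)

theorem card_primSqAddSqSols_zero (h2 : (2 : F) ≠ 0) :
    #(primSqAddSqSols (0 : F)) = if IsSquare (-1 : F) then 2 * (Fintype.card F - 1) else 0 := by
  have himprim : imprimSqAddSqSols (0 : F) = {0} := by
    ext z
    simp only [mem_imprimSqAddSqSols, isUnit_iff_ne_zero, not_not, mem_singleton, Prod.ext_iff,
      Prod.fst_zero, Prod.snd_zero]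
    constructor
    · exact fun h => h.2
    · rintro ⟨h1, h2⟩
      simp [h1, h2]
  have h := card_sqAddSqSols_eq (0 : F)
  rw [himprim, card_singleton] at h
  split_ifs with hsq
  · have h0 := card_sqAddSqSols_zero_add_one h2 hsq
    omega
  · rw [sqAddSqSols_zero_of_not_isSquare hsq, card_singleton] at h
    omega

end Field

section ZModPrime

variable {p : ℕ} [Fact p.Prime]

theorem card_sqAddSqSols_eq_card_sqAddSqSols_one {c : ZMod p} (hc : c ≠ 0) :
    #(sqAddSqSols c) = #(sqAddSqSols (1 : ZMod p)) := by
  obtain ⟨a, b, hab⟩ := ZMod.sq_add_sq p c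
  rw [← card_sqAddSqSols_sq_add_sq_mul (hab ▸ hc) 1, hab, mul_one]

theorem card_sqAddSqSols_one_mul_add_card_sqAddSqSols_zero :
    (p - 1) * #(sqAddSqSols (1 : ZMod p)) + #(sqAddSqSols (0 : ZMod p)) = p ^ 2 := by
  have htotal := sum_card_sqAddSqSols (R := ZMod p)
  rw [ZMod.card] at htotal
  rw [← htotal, ← add_sum_erase _ _ (mem_univ 0),
    sum_congr rfl fun c hc => card_sqAddSqSols_eq_card_sqAddSqSols_one (ne_of_mem_erase hc),
    sum_const, card_erase_of_mem (mem_univ 0), card_univ, ZMod.card, smul_eq_mul, add_comm]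

theorem card_primSqAddSqSols_one (hp2 : p ≠ 2) :
    #(primSqAddSqSols (1 : ZMod p)) = if IsSquare (-1 : ZMod p) then p - 1 else p + 1 := by
  have h2 : (2 : ZMod p) ≠ 0 := Ring.two_ne_zero (by rwa [ZMod.ringChar_zmod_n])
  have hp : 2 ≤ p := (Fact.out : p.Prime).two_le
  have hsum := card_sqAddSqSols_one_mul_add_card_sqAddSqSols_zero (p := p)
  rw [primSqAddSqSols_of_ne_zero one_ne_zero]
  split_ifs with h
  · have h0 := card_sqAddSqSols_zero_add_one h2 h
    rw [ZMod.card] at h0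
    refine Nat.eq_of_mul_eq_mul_left (by omega : 0 < p - 1) ?_
    zify [(by omega : 1 ≤ p)] at hsum h0 ⊢
    linear_combination hsum - h0
  · rw [sqAddSqSols_zero_of_not_isSquare h, card_singleton] at hsum
    refine Nat.eq_of_mul_eq_mul_left (by omega : 0 < p - 1) ?_
    zify [(by omega : 1 ≤ p)] at hsum ⊢
    linear_combination hsum

theorem card_primSqAddSqSols_of_ne_zero {c : ZMod p} (hc : c ≠ 0) :
    #(primSqAddSqSols c) = #(primSqAddSqSols (1 : ZMod p)) := by
  rw [primSqAddSqSols_of_ne_zero hc, primSqAddSqSols_of_ne_zero one_ne_zero,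
    card_sqAddSqSols_eq_card_sqAddSqSols_one hc]

end ZModPrime

section Hensel

variable {p : ℕ} [Fact p.Prime]

theorem ZMod.eq_of_sq_eq_of_ringHom_eq (hp2 : p ≠ 2) {n m : ℕ} (hm : m ≠ 0)
    (f : ZMod (p ^ n) →+* ZMod (p ^ m)) {x y : ZMod (p ^ n)} (hx : IsUnit x) (hxy : f x = f y)
    (h : x ^ 2 = y ^ 2) : x = y := by
  have hsum : IsUnit (x + y) := by
    rw [← isUnit_ringHom_iff hm f, map_add, ← hxy, ← two_mul]
    exact (isUnit_two_of_ne_two hp2 hm).mul ((isUnit_ringHom_iff hm f).mpr hx)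
  exact sub_eq_zero.mp (hsum.mul_left_eq_zero.mp (by linear_combination h))

theorem ZMod.exists_sq_eq_of_ringHom_eq (hp2 : p ≠ 2) {n m : ℕ} (hm : m ≠ 0) (hnm : n ≤ 2 * m)
    (f : ZMod (p ^ n) →+* ZMod (p ^ m)) {X c : ZMod (p ^ n)} (hX : IsUnit X)
    (hc : f c = f X ^ 2) : ∃ x, x ^ 2 = c ∧ f x = f X := by
  have h2 : IsUnit (2 : ZMod (p ^ n)) := by
    rw [← isUnit_ringHom_iff hm f, map_ofNat]
    exact isUnit_two_of_ne_two hp2 hm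
  obtain ⟨u, hu⟩ := (h2.mul hX).exists_right_inv
  have hE : f (c - X ^ 2) = 0 := by rw [map_sub, map_pow, hc, sub_self]
  have hE2 := mul_eq_zero_of_ringHom_eq_zero hnm f hE hE
  -- one Newton step, exact because the error term squares to zero
  refine ⟨X + u * (c - X ^ 2), ?_, by rw [map_add, map_mul, hE, mul_zero, add_zero]⟩
  linear_combination (c - X ^ 2) * hu + u ^ 2 * hE2

theorem card_sq_add_sq_lifts (hp2 : p ≠ 2) {k : ℕ} (hk : k ≠ 0)
    (f : ZMod (p ^ (k + 1)) →+* ZMod (p ^ k)) (t : ZMod (p ^ (k + 1))) {x₀ y₀ : ZMod (p ^ k)}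
    (hx₀ : IsUnit x₀) (h : x₀ ^ 2 + y₀ ^ 2 = f t) :
    #{z : ZMod (p ^ (k + 1)) × ZMod (p ^ (k + 1)) |
        z.1 ^ 2 + z.2 ^ 2 = t ∧ f z.1 = x₀ ∧ f z.2 = y₀} = p := by
  obtain ⟨X, rfl⟩ := ZMod.ringHom_surjective f x₀
  obtain ⟨Y, rfl⟩ := ZMod.ringHom_surjective f y₀
  have hX : IsUnit X := (ZMod.isUnit_ringHom_iff hk f).mp hx₀
  have hfiber : #{y | f y = f Y} = p :=
    (AddMonoidHom.card_fiber_eq_of_mem_range (f : ZMod (p ^ (k + 1)) →+ ZMod (p ^ k))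
      ⟨Y, rfl⟩ ⟨0, map_zero f⟩).trans
      ((ZMod.card_filter_ringHom_eq_zero (j := 1) f).trans (pow_one p))
  refine .trans (card_nbij Prod.snd (fun z hz => by simp_all) (fun z hz z' hz' hzz' => ?_)
    fun y hy => ?_) hfiber
  · simp only [mem_coe, mem_filter, mem_univ, true_and] at hz hz'
    refine Prod.ext (ZMod.eq_of_sq_eq_of_ringHom_eq hp2 hk f ?_ (hz.2.1.trans hz'.2.1.symm) ?_) hzz'
    · exact (ZMod.isUnit_ringHom_iff hk f).mp (hz.2.1 ▸ hx₀)
    · linear_combination hz.1 - hz'.1 - (z.2 + z'.2) * hzz'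
  · simp only [mem_coe, mem_filter, mem_univ, true_and] at hy
    obtain ⟨x, hx, hfx⟩ := ZMod.exists_sq_eq_of_ringHom_eq hp2 hk (by omega) f (c := t - y ^ 2) hX
      (by rw [map_sub, map_pow, hy]; linear_combination -h)
    refine ⟨(x, y), ?_, rfl⟩
    simp only [mem_coe, mem_filter, mem_univ, true_and]
    exact ⟨by rw [hx]; ring, hfx, hy⟩

theorem card_primSqAddSqSols_succ (hp2 : p ≠ 2) {k : ℕ} (hk : k ≠ 0)
    (f : ZMod (p ^ (k + 1)) →+* ZMod (p ^ k)) (t : ZMod (p ^ (k + 1))) :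
    #(primSqAddSqSols t) = p * #(primSqAddSqSols (f t)) := by
  have hunit : ∀ x, IsUnit (f x) ↔ IsUnit x := fun x => ZMod.isUnit_ringHom_iff hk f
  have hmaps : Set.MapsTo (Prod.map f f) (primSqAddSqSols t) (primSqAddSqSols (f t)) := by
    intro z hz
    simp only [mem_coe, mem_primSqAddSqSols, Prod.map_fst, Prod.map_snd, hunit] at hz ⊢
    exact ⟨by rw [← hz.1]; simp, hz.2⟩
  rw [card_eq_sum_card_fiberwise hmaps, mul_comm, ← smul_eq_mul, ← sum_const]
  refine sum_congr rfl fun z₀ hz₀ => ?_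
  rw [mem_primSqAddSqSols] at hz₀
  have hfib : {z ∈ primSqAddSqSols t | Prod.map f f z = z₀}
      = ({z | z.1 ^ 2 + z.2 ^ 2 = t ∧ f z.1 = z₀.1 ∧ f z.2 = z₀.2} :
        Finset (ZMod (p ^ (k + 1)) × ZMod (p ^ (k + 1)))) := by
    ext z
    simp only [mem_filter, mem_primSqAddSqSols, mem_univ, true_and, Prod.ext_iff, Prod.map_fst,
      Prod.map_snd]
    constructor
    · rintro ⟨⟨hz, -⟩, h1, h2⟩
      exact ⟨hz, h1, h2⟩
    · rintro ⟨hz, h1, h2⟩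
      exact ⟨⟨hz, by rw [← hunit, ← hunit, h1, h2]; exact hz₀.2⟩, h1, h2⟩
  rw [hfib]
  rcases hz₀ with ⟨hsum, hx₀ | hy₀⟩
  · exact card_sq_add_sq_lifts hp2 hk f t hx₀ hsum
  · refine .trans ?_ (card_sq_add_sq_lifts hp2 hk f t hy₀ (by rw [← hsum, add_comm]))
    exact card_equiv (Equiv.prodComm _ _) fun z => by simp [add_comm, and_comm]

theorem card_primSqAddSqSols_pow_succ (hp2 : p ≠ 2) (k : ℕ) (ρ : ZMod (p ^ (k + 1)) →+* ZMod p)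
    (t : ZMod (p ^ (k + 1))) : #(primSqAddSqSols t) = p ^ k * #(primSqAddSqSols (ρ t)) := by
  induction k with
  | zero =>
    let e : ZMod (p ^ (0 + 1)) ≃+* ZMod p := ZMod.ringEquivCongr (pow_one p)
    rw [pow_zero, one_mul, show ρ = e from Subsingleton.elim _ _]
    exact (card_primSqAddSqSols_map_equiv e t).symm
  | succ k ih =>
    let f := ZMod.castHom (pow_dvd_pow p (k + 1).le_succ) (ZMod (p ^ (k + 1)))
    let ρ' := ZMod.castHom (dvd_pow_self p k.succ_ne_zero) (ZMod p)
    rw [card_primSqAddSqSols_succ hp2 k.succ_ne_zero f, ih ρ',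
      show ρ = ρ'.comp f from Subsingleton.elim _ _, RingHom.comp_apply]
    ring

end Hensel

section Imprimitive

variable {p : ℕ} [Fact p.Prime]

theorem imprimSqAddSqSols_pow_mul_eq_empty {n R : ℕ} (hR : R < 2) (hRn : R < n)
    {w : ZMod (p ^ n)} (hw : IsUnit w) : imprimSqAddSqSols ((p : ZMod (p ^ n)) ^ R * w) = ∅ := by
  refine eq_empty_of_forall_notMem fun ⟨x, y⟩ hz => ?_
  obtain ⟨hz, hx, hy⟩ := mem_imprimSqAddSqSols.mp hz
  obtain ⟨a, rfl⟩ := (ZMod.not_isUnit_iff_exists_eq_mul (by omega)).mp hx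
  obtain ⟨b, rfl⟩ := (ZMod.not_isUnit_iff_exists_eq_mul (by omega)).mp hy
  have hpw : (p : ZMod (p ^ n)) ^ R * w = p * (p * (a ^ 2 + b ^ 2)) := by
    rw [← hz]; ring
  interval_cases R
  · rw [pow_zero, one_mul] at hpw
    exact (ZMod.not_isUnit_iff_exists_eq_mul (by omega)).mpr ⟨_, hpw⟩ hw
  · have hu : IsUnit (w - p * (a ^ 2 + b ^ 2)) := by
      let ρ := ZMod.castHom (dvd_pow_self p (by omega : n ≠ 0)) (ZMod p)
      rw [ZMod.isUnit_iff_residue_ne_zero ρ] at hw ⊢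
      rwa [map_sub, map_mul, map_natCast, ZMod.natCast_self, zero_mul, sub_zero]
    have hp0 : (p : ZMod (p ^ n)) = 0 :=
      hu.mul_left_eq_zero.mp (by linear_combination hpw)
    rw [ZMod.natCast_eq_zero_iff] at hp0
    have := (Nat.pow_dvd_pow_iff_le_right (Fact.out : p.Prime).one_lt).mp
      (show p ^ n ∣ p ^ 1 by rwa [pow_one])
    omega

theorem natCast_mul_mem_imprimSqAddSqSols_iff {s : ℕ} (f : ZMod (p ^ (s + 2)) →+* ZMod (p ^ s))
    (u a b : ZMod (p ^ (s + 2))) :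
    ((p : ZMod (p ^ (s + 2))) * a, (p : ZMod (p ^ (s + 2))) * b)
        ∈ imprimSqAddSqSols ((p : ZMod (p ^ (s + 2))) ^ 2 * u)
      ↔ (f a, f b) ∈ sqAddSqSols (f u) := by
  have hnu : ∀ c : ZMod (p ^ (s + 2)), ¬IsUnit ((p : ZMod (p ^ (s + 2))) * c) :=
    fun c => (ZMod.not_isUnit_iff_exists_eq_mul (by omega)).mpr ⟨c, rfl⟩
  simp only [mem_imprimSqAddSqSols, mem_sqAddSqSols, hnu, not_false_eq_true, and_true]
  rw [← sub_eq_zero, ← sub_eq_zero (b := f u), ← map_pow, ← map_pow, ← map_add, ← map_sub,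
    ← ZMod.pow_mul_eq_zero_iff (j := 2)]
  constructor <;> intro h <;> linear_combination h

/- Multiplication by `p` maps onto the non-units of `ZMod (p ^ (s + 2))` with fibres of size `p`,
and membership of `(p a, p b)` only depends on `a` and `b` modulo `p ^ s`. -/
theorem card_imprimSqAddSqSols_sq_mul {s : ℕ} (f : ZMod (p ^ (s + 2)) →+* ZMod (p ^ s))
    (u : ZMod (p ^ (s + 2))) :
    #(imprimSqAddSqSols ((p : ZMod (p ^ (s + 2))) ^ 2 * u)) = p ^ 2 * #(sqAddSqSols (f u)) := by
  let μ := AddMonoidHom.mulLeft (p : ZMod (p ^ (s + 2)))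
  let F := (f : ZMod (p ^ (s + 2)) →+ ZMod (p ^ s))
  have hμ : #{x | μ x = 0} = p := ZMod.card_filter_natCast_mul_eq_zero (m := s + 1)
  have hF : #{x | F x = 0} = p ^ 2 := ZMod.card_filter_ringHom_eq_zero (j := 2) f
  have hrange : (imprimSqAddSqSols ((p : ZMod (p ^ (s + 2))) ^ 2 * u) : Set _)
      ⊆ Set.range (μ.prodMap μ) := by
    intro z hz
    obtain ⟨-, hx, hy⟩ := mem_imprimSqAddSqSols.mp hz
    obtain ⟨a, ha⟩ := (ZMod.not_isUnit_iff_exists_eq_mul (by omega)).mp hx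
    obtain ⟨b, hb⟩ := (ZMod.not_isUnit_iff_exists_eq_mul (by omega)).mp hy
    exact ⟨(a, b), Prod.ext ha.symm hb.symm⟩
  have hpre : ({z | μ.prodMap μ z ∈ imprimSqAddSqSols ((p : ZMod (p ^ (s + 2))) ^ 2 * u)} :
        Finset (ZMod (p ^ (s + 2)) × ZMod (p ^ (s + 2))))
      = ({z | F.prodMap F z ∈ sqAddSqSols (f u)} :
        Finset (ZMod (p ^ (s + 2)) × ZMod (p ^ (s + 2)))) :=
    filter_congr fun z _ => natCast_mul_mem_imprimSqAddSqSols_iff f u z.1 z.2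
  have h := (μ.prodMap μ).card_filter_mem_eq hrange
  rw [hpre, (F.prodMap F).card_filter_mem_eq (by simp [F, (ZMod.ringHom_surjective f).range_eq]),
    AddMonoidHom.card_filter_prodMap_eq_zero, AddMonoidHom.card_filter_prodMap_eq_zero, hμ, hF]
    at h
  have hp : 0 < p * p := Nat.mul_pos (Fact.out : p.Prime).pos (Fact.out : p.Prime).pos
  exact Nat.eq_of_mul_eq_mul_right hp (by linear_combination h.symm)

end Imprimitive

section PrimePower

variable {p : ℕ} [Fact p.Prime]

def sqAddSqLocalFactor (p R : ℕ) [NeZero p] : ℕ :=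
  R / 2 * #(primSqAddSqSols (0 : ZMod p)) +
    if Even R then #(primSqAddSqSols (1 : ZMod p)) else #(primSqAddSqSols (0 : ZMod p))

theorem sqAddSqLocalFactor_add_two (R : ℕ) :
    sqAddSqLocalFactor p (R + 2) = #(primSqAddSqSols (0 : ZMod p)) + sqAddSqLocalFactor p R := by
  simp only [sqAddSqLocalFactor, Nat.even_add, even_two, iff_true]
  rw [show (R + 2) / 2 = R / 2 + 1 by omega]
  ring

theorem card_sqAddSqSols_pow_mul (hp2 : p ≠ 2) {R n : ℕ} (hRn : R < n) {w : ZMod (p ^ n)}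
    (hw : IsUnit w) :
    #(sqAddSqSols ((p : ZMod (p ^ n)) ^ R * w)) = p ^ (n - 1) * sqAddSqLocalFactor p R := by
  induction R using Nat.strong_induction_on generalizing n with
  | _ R ih =>
  obtain ⟨k, rfl⟩ : ∃ k, n = k + 1 := ⟨n - 1, by omega⟩
  let ρ := ZMod.castHom (dvd_pow_self p k.succ_ne_zero) (ZMod p)
  rw [card_sqAddSqSols_eq, card_primSqAddSqSols_pow_succ hp2 k ρ, Nat.add_sub_cancel]
  rcases lt_or_ge R 2 with hR | hR
  · rw [imprimSqAddSqSols_pow_mul_eq_empty hR hRn hw, card_empty, add_zero]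
    congr 1
    interval_cases R
    · have hρ : ρ w ≠ 0 := (ZMod.isUnit_iff_residue_ne_zero ρ w).mp hw
      rw [pow_zero, one_mul, card_primSqAddSqSols_of_ne_zero hρ]
      simp [sqAddSqLocalFactor]
    · simp [ρ, sqAddSqLocalFactor]
  · obtain ⟨S, rfl⟩ : ∃ S, R = S + 2 := ⟨R - 2, by omega⟩
    obtain ⟨s, rfl⟩ : ∃ s, k = s + 1 := ⟨k - 1, by omega⟩
    let f := ZMod.castHom (pow_dvd_pow p (by omega : s ≤ s + 2)) (ZMod (p ^ s))
    have ht : (p : ZMod (p ^ (s + 2))) ^ (S + 2) * w = p ^ 2 * (p ^ S * w) := by ring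
    have hρ : ρ ((p : ZMod (p ^ (s + 2))) ^ (S + 2) * w) = 0 := by simp [ρ]
    rw [hρ, ht, card_imprimSqAddSqSols_sq_mul f, map_mul, map_pow, map_natCast,
      ih S (by omega) (by omega : S < s) (hw.map f), sqAddSqLocalFactor_add_two, ← mul_assoc,
      show p ^ 2 * p ^ (s - 1) = p ^ (s + 1) by rw [← pow_add]; congr 1; omega]
    ring

end PrimePower

theorem card_quaternary_eq_sum {R : Type*} [CommRing R] [Fintype R] [DecidableEq R] (a b m : R) :
    Nat.card {v : Fin 4 → R // v 0 ^ 2 + v 1 ^ 2 + a * v 2 ^ 2 + b * v 3 ^ 2 = m}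
      = ∑ z : R × R, #(sqAddSqSols (m - a * z.1 ^ 2 - b * z.2 ^ 2)) := by
  rw [Nat.card_eq_fintype_card, Fintype.card_subtype, card_eq_sum_card_fiberwise
    (f := fun v => (v 2, v 3)) (t := univ) fun _ _ => mem_coe.mpr (mem_univ _)]
  refine sum_congr rfl fun z _ => card_nbij' (fun v => (v 0, v 1)) (fun w => ![w.1, w.2, z.1, z.2])
    (fun v hv => ?_) (fun w hw => ?_) (fun v hv => ?_) (fun w _ => rfl)
  · simp only [mem_coe, mem_filter, mem_univ, true_and, Prod.ext_iff, mem_sqAddSqSols] at hv ⊢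
    rw [← hv.1, ← hv.2.1, ← hv.2.2]
    ring
  · simp only [mem_coe, mem_filter, mem_univ, true_and, Prod.ext_iff, mem_sqAddSqSols] at hw ⊢
    refine ⟨?_, rfl, rfl⟩
    simp only [Matrix.cons_val]
    linear_combination hw
  · simp only [mem_coe, mem_filter, mem_univ, true_and, Prod.ext_iff] at hv
    ext i
    fin_cases i <;> simp [hv.2.1, hv.2.2]

section Quaternary

variable {p : ℕ} [Fact p.Prime]

theorem exists_isUnit_sub_eq_pow_mul {r α₃ α₄ d₃' d₄' R m' : ℕ} (hα : α₃ ≤ α₄) (hR : R < 2 * α₃)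
    (hr : R < r) (hpm' : ¬p ∣ m') (x y : ZMod (p ^ r)) :
    ∃ w : ZMod (p ^ r), IsUnit w ∧
      (((p : ℤ) ^ R * m' : ℤ) : ZMod (p ^ r)) - ((p ^ α₃ * d₃' : ℕ) : ZMod (p ^ r)) ^ 2 * x ^ 2
        - ((p ^ α₄ * d₄' : ℕ) : ZMod (p ^ r)) ^ 2 * y ^ 2 = p ^ R * w := by
  obtain ⟨a, ha⟩ : ∃ a, 2 * α₃ = R + (a + 1) := ⟨2 * α₃ - R - 1, by omega⟩
  obtain ⟨b, hb⟩ : ∃ b, α₄ = α₃ + b := ⟨α₄ - α₃, by omega⟩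
  refine ⟨m' - p * (p ^ a * (d₃' ^ 2 * x ^ 2 + p ^ (2 * b) * d₄' ^ 2 * y ^ 2)), ?_, ?_⟩
  · let ρ := ZMod.castHom (dvd_pow_self p (by omega : r ≠ 0)) (ZMod p)
    rw [ZMod.isUnit_iff_residue_ne_zero ρ]
    rwa [map_sub, map_mul, map_natCast ρ p, ZMod.natCast_self, zero_mul, sub_zero, map_natCast,
      Ne, ZMod.natCast_eq_zero_iff]
  · have h₃ : (p : ZMod (p ^ r)) ^ (2 * α₃) = p ^ R * (p * p ^ a) := by
      rw [ha, pow_add, pow_succ']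
    have h₄ : (p : ZMod (p ^ r)) ^ (2 * α₄) = p ^ R * (p * p ^ a) * p ^ (2 * b) := by
      rw [hb, mul_add, ha, pow_add, pow_add, pow_succ']
    push_cast
    linear_combination
      -(d₃' : ZMod (p ^ r)) ^ 2 * x ^ 2 * h₃ - (d₄' : ZMod (p ^ r)) ^ 2 * y ^ 2 * h₄

theorem quaternaryLocalCount_eq (hp2 : p ≠ 2) {r α₃ α₄ d₃' d₄' R m' : ℕ} (hα : α₃ ≤ α₄)
    (hR : R < 2 * α₃) (hpm' : ¬p ∣ m') (hr : R < r) :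
    quaternaryLocalCount p r (p ^ α₃ * d₃') (p ^ α₄ * d₄') ((p : ℤ) ^ R * m')
      = p ^ (3 * r - 1) * sqAddSqLocalFactor p R := by
  rw [quaternaryLocalCount, card_quaternary_eq_sum]
  have hterm : ∀ z : ZMod (p ^ r) × ZMod (p ^ r),
      #(sqAddSqSols ((((p : ℤ) ^ R * m' : ℤ) : ZMod (p ^ r))
        - ((p ^ α₃ * d₃' : ℕ) : ZMod (p ^ r)) ^ 2 * z.1 ^ 2
        - ((p ^ α₄ * d₄' : ℕ) : ZMod (p ^ r)) ^ 2 * z.2 ^ 2))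
      = p ^ (r - 1) * sqAddSqLocalFactor p R := fun z => by
    obtain ⟨w, hw, hz⟩ := exists_isUnit_sub_eq_pow_mul hα hR hr hpm' z.1 z.2
    rw [hz, card_sqAddSqSols_pow_mul hp2 hr hw]
  rw [sum_congr rfl fun z _ => hterm z, sum_const, card_univ, Fintype.card_prod, ZMod.card,
    smul_eq_mul, ← mul_assoc, ← pow_add, ← pow_add]
  congr 2
  omega

theorem sqAddSqLocalFactor_div_eq (hp2 : p ≠ 2) (R : ℕ) {ε : ℝ}
    (hε : ε = if p % 4 = 1 then 1 else -1) :
    (sqAddSqLocalFactor p R : ℝ) / p = if Odd R then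
          1 + (1 - (p : ℝ)⁻¹) * (((R / 2 : ℕ) : ℝ) + ε * (((R + 1) / 2 : ℕ) : ℝ)) - (p : ℝ)⁻¹
        else
          1 + (1 - (p : ℝ)⁻¹) * (((R / 2 : ℕ) : ℝ) + ε * (((R + 1) / 2 : ℕ) : ℝ))
            - ε * (p : ℝ)⁻¹ := by
  have hp := (Fact.out : p.Prime).two_le
  have hodd : p % 2 = 1 := Nat.odd_iff.mp ((Fact.out : p.Prime).odd_of_ne_two hp2)
  have hsq : IsSquare (-1 : ZMod p) ↔ p % 4 = 1 := by
    rw [ZMod.exists_sq_eq_neg_one_iff]; omega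
  have hc₁ : (#(primSqAddSqSols (1 : ZMod p)) : ℝ) = p - ε := by
    rw [card_primSqAddSqSols_one hp2, hε]
    simp only [hsq]
    split_ifs <;> push_cast [Nat.cast_sub (by omega : 1 ≤ p)] <;> ring
  have hc₀ : (#(primSqAddSqSols (0 : ZMod p)) : ℝ) = (p - 1) * (1 + ε) := by
    rw [card_primSqAddSqSols_zero (Ring.two_ne_zero (by rwa [ZMod.ringChar_zmod_n])), ZMod.card, hε]
    simp only [hsq]
    split_ifs <;> push_cast [Nat.cast_sub (by omega : 1 ≤ p)] <;> ring
  have hp0 : (p : ℝ) ≠ 0 := by positivity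
  simp only [sqAddSqLocalFactor]
  push_cast
  rw [hc₀, hc₁]
  rcases Nat.even_or_odd R with hR | hR
  · have hR2 : (R + 1) / 2 = R / 2 := by obtain ⟨k, rfl⟩ := hR; omega
    simp only [hR, Nat.not_odd_iff_even.mpr hR, hR2, if_true, if_false]
    field_simp
    ring
  · have hR2 : (R + 1) / 2 = R / 2 + 1 := by obtain ⟨k, rfl⟩ := hR; omega
    simp only [hR, Nat.not_even_iff_odd.mpr hR, hR2, if_true, if_false]
    push_cast
    field_simp
    ring

end Quaternary

theorem quaternary_local_density_low_general (p : ℕ) (hp : p.Prime) (hp2 : p ≠ 2)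
    (α₃ α₄ d₃' d₄' : ℕ) (hα : α₃ ≤ α₄)
    (R m' : ℕ) (hpm' : ¬ p ∣ m') (hR : R < 2 * α₃) (ε : ℝ)
    (hε : ε = if p % 4 = 1 then 1 else -1) :
    Tendsto (fun r : ℕ =>
        (quaternaryLocalCount p r (p ^ α₃ * d₃') (p ^ α₄ * d₄')
            ((p : ℤ) ^ R * m') : ℝ) / (p : ℝ) ^ (3 * r))
      atTop
      (nhds (if Odd R then
          1 + (1 - (p : ℝ)⁻¹) * (((R / 2 : ℕ) : ℝ) + ε * (((R + 1) / 2 : ℕ) : ℝ)) - (p : ℝ)⁻¹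
        else
          1 + (1 - (p : ℝ)⁻¹) * (((R / 2 : ℕ) : ℝ) + ε * (((R + 1) / 2 : ℕ) : ℝ))
            - ε * (p : ℝ)⁻¹)) := by
  have : Fact p.Prime := ⟨hp⟩
  refine tendsto_atTop_of_eventually_const (i₀ := R + 1) fun r hr => ?_
  rw [quaternaryLocalCount_eq hp2 hα hR hpm' hr, ← sqAddSqLocalFactor_div_eq hp2 R hε,
    Nat.cast_mul, Nat.cast_pow]
  have hp0 : (p : ℝ) ≠ 0 := by exact_mod_cast hp.ne_zero
  obtain ⟨k, hk⟩ : ∃ k, 3 * r = k + 1 := ⟨3 * r - 1, by omega⟩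
  rw [hk, Nat.add_sub_cancel, pow_succ]
  field_simp

/-- **Local density of `x₁² + x₂² + d₃²x₃² + d₄²x₄²` at an odd prime, case `R < 2α₃`.**
Let `p` be an odd prime, `d₃ = p^α₃ d₃′`, `d₄ = p^α₄ d₄′` with `p ∤ d₃′ d₄′` and
`α₃ ≤ α₄`, and `m = p^R m′` with `p ∤ m′`. Set `ε = 1` if `p ≡ 1 (mod 4)` and `ε = −1`
if `p ≡ 3 (mod 4)`. If `R < 2α₃`, then `N_{d₃,d₄}(p^r; m)/p^(3r)` converges, as
`r → ∞`, to `1 + (1 − p⁻¹)(⌊R/2⌋ + ε⌊(R+1)/2⌋) − p⁻¹` for odd `R`, and to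
`1 + (1 − p⁻¹)(⌊R/2⌋ + ε⌊(R+1)/2⌋) − ε p⁻¹` for even `R`. -/
theorem quaternary_local_density_low (p : ℕ) (hp : p.Prime) (hp2 : p ≠ 2)
    (α₃ α₄ d₃' d₄' : ℕ) (hd₃' : 0 < d₃') (hd₄' : 0 < d₄')
    (hpd₃' : ¬ p ∣ d₃') (hpd₄' : ¬ p ∣ d₄') (hα : α₃ ≤ α₄)
    (R m' : ℕ) (hm' : 0 < m') (hpm' : ¬ p ∣ m') (hR : R < 2 * α₃) (ε : ℝ)
    (hε : ε = if p % 4 = 1 then 1 else -1) :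
    Tendsto (fun r : ℕ =>
        (quaternaryLocalCount p r (p ^ α₃ * d₃') (p ^ α₄ * d₄')
            ((p : ℤ) ^ R * m') : ℝ) / (p : ℝ) ^ (3 * r))
      atTop
      (nhds (if Odd R then
          1 + (1 - (p : ℝ)⁻¹) * (((R / 2 : ℕ) : ℝ) + ε * (((R + 1) / 2 : ℕ) : ℝ)) - (p : ℝ)⁻¹
        else
          1 + (1 - (p : ℝ)⁻¹) * (((R / 2 : ℕ) : ℝ) + ε * (((R + 1) / 2 : ℕ) : ℝ))
            - ε * (p : ℝ)⁻¹)) :=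
  quaternary_local_density_low_general p hp hp2 α₃ α₄ d₃' d₄' hα R m' hpm' hR ε hε
end

section
/- Let p be an odd prime and m a positive integer with p ∤ m. Set ε = 1 if p ≡ 1 (mod 4) and ε = −1 if p ≡ 3 (mod 4), and let (m/p) denote the Legendre symbol. Let d₃, d₄ be positive integers such that p divides d₃·d₄ exactly to the first power (p ∣ d₃·d₄ but p² ∤ d₃·d₄). Then there exists a real number L such that the sequence r ↦ N_{1,1}(p^r; m)/p^{3r} converges to L and the sequence r ↦ N_{d₃,d₄}(p^r; m)/p^{3r} converges to ω₁·L, where ω₁ = (1 + ε·(m/p)·p^{−1})/(1 − p^{−2}). -/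
/-! Since `p ∤ m` and `p` is odd, every solution of `∑ aᵢ xᵢ² ≡ m (mod p^r)`, `r ≥ 1`, has a
coordinate with `2 aᵢ xᵢ` a unit, so modulo `p^(r+1)` it lifts to exactly `p³` solutions (Hensel's
lemma, the kernel of reduction squaring to zero). Both density sequences are therefore constant
from `r = 1` on, equal to `N(p)/p³`. Modulo `p`, the quadratic character `χ` counts
`#{x² + y² = c}` as `p - χ(-1)` for `c ≠ 0` and `p + (p - 1) χ(-1)` for `c = 0`; summing over the
last two variables gives `N(p) = p³ - p` for `x₁² + x₂² + x₃² + x₄²` and, when `p` divides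
exactly one of `d₃, d₄`, `N(p) = p³ + χ(-1) (m/p) p²`, where `χ(-1) = ε`. -/

open Filter

open Finset Topology

section DiagonalForm

variable {ι R S : Type*} [Fintype ι]

def diagForm [CommSemiring R] (a x : ι → R) : R := ∑ i, a i * x i ^ 2

theorem card_sum_smul_eq_mul_card [DecidableEq ι] {M : Type*} [Ring R] [AddCommGroup M]
    [Module R M] [Finite M] {c : ι → R} {i₀ : ι} (hc : IsUnit (c i₀)) (t : M) :
    Nat.card {k : ι → M // ∑ i, c i • k i = t} * Nat.card M = Nat.card M ^ Fintype.card ι := by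
  classical
  have := Fintype.ofFinite M
  let L : (ι → M) →+ M :=
    { toFun := fun k => ∑ i, c i • k i
      map_zero' := by simp
      map_add' := fun k k' => by simp [smul_add, sum_add_distrib] }
  have hL : Function.Surjective L := fun s =>
    ⟨Pi.single i₀ ((hc.unit⁻¹ : Rˣ) • s),
      by simp [L, Pi.single_apply, Units.smul_def, smul_smul]⟩
  have hfib (s : M) : #{k | L k = s} = #{k | L k = t} :=
    AddMonoidHom.card_fiber_eq_of_mem_range L (hL s) (hL t)
  have hsum := card_eq_sum_card_fiberwise (f := L) (s := univ) (t := univ) (by simp)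
  simp only [card_univ, hfib, sum_const, smul_eq_mul, Fintype.card_fun] at hsum
  rw [Nat.card_eq_fintype_card, Fintype.card_subtype, Nat.card_eq_fintype_card, hsum, mul_comm]
  rfl

variable [CommRing R] [CommRing S] (π : R →+* S)

theorem map_diagForm (a x : ι → R) : π (diagForm a x) = diagForm (π ∘ a) (π ∘ x) := by
  simp [diagForm]

theorem diagForm_add_of_mul_self_eq_zero (a x k : ι → R) (hk : ∀ i, k i * k i = 0) :
    diagForm a (x + k) = diagForm a x + ∑ i, 2 * a i * x i * k i := by
  simp only [diagForm, Pi.add_apply, ← sum_add_distrib]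
  exact sum_congr rfl fun i _ => by linear_combination a i * hk i

/-- The fibre over `π ∘ x₀` is `x₀ + (ker π)^ι`, on which the equation becomes the linear
equation `∑ i, 2 aᵢ x₀ᵢ kᵢ = m - diagForm a x₀` in `ker π`. -/
theorem card_fiber_diagForm_mul_card_ker [DecidableEq ι] [Finite R]
    (hK : ∀ k ∈ RingHom.ker π, k * k = 0) {a x₀ : ι → R} {m : R}
    (hx₀ : π (diagForm a x₀) = π m) {i₀ : ι} (hu : IsUnit (2 * a i₀ * x₀ i₀)) :
    Nat.card {x : ι → R // diagForm a x = m ∧ π ∘ x = π ∘ x₀} * Nat.card (RingHom.ker π) =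
      Nat.card (RingHom.ker π) ^ Fintype.card ι := by
  have ht : m - diagForm a x₀ ∈ RingHom.ker π := by
    rw [RingHom.mem_ker, map_sub, hx₀, sub_self]
  have hsol (k : ι → RingHom.ker π) : diagForm a (x₀ + fun i => (k i : R)) = m ↔
      ∑ i, (2 * a i * x₀ i) • k i = ⟨m - diagForm a x₀, ht⟩ := by
    rw [diagForm_add_of_mul_self_eq_zero _ _ _ fun i => hK _ (k i).2, Subtype.ext_iff]
    simp only [Submodule.coe_sum, Submodule.coe_smul, smul_eq_mul]
    constructor <;> intro h <;> linear_combination h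
  rw [← card_sum_smul_eq_mul_card (M := RingHom.ker π) (c := fun i => 2 * a i * x₀ i) hu
    ⟨m - diagForm a x₀, ht⟩]
  congr 1
  refine Nat.card_congr
    { toFun := fun x => ⟨fun i => ⟨x.1 i - x₀ i, ?_⟩, ?_⟩
      invFun := fun k => ⟨x₀ + fun i => (k.1 i : R), ?_, ?_⟩
      left_inv := fun x => by ext; simp
      right_inv := fun k => by ext; simp }
  · rw [RingHom.mem_ker, map_sub, sub_eq_zero]
    exact congrFun x.2.2 i
  · rw [← hsol]
    convert x.2.1
    ext i
    simp
  · exact (hsol k.1).2 k.2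
  · ext i; simp [RingHom.mem_ker.1 (k.1 i).2]

theorem card_diagForm_mul_card_ker [Finite R] [Finite S] (hπ : Function.Surjective π)
    (hK : ∀ k ∈ RingHom.ker π, k * k = 0) (a : ι → R) (m : R)
    (hu : ∀ x, π (diagForm a x) = π m → ∃ i, IsUnit (2 * a i * x i)) :
    Nat.card {x : ι → R // diagForm a x = m} * Nat.card (RingHom.ker π) =
      Nat.card (RingHom.ker π) ^ Fintype.card ι *
        Nat.card {y : ι → S // diagForm (π ∘ a) y = π m} := by
  classical
  have := Fintype.ofFinite R
  have := Fintype.ofFinite S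
  have hmaps : ((univ.filter fun x => diagForm a x = m : Finset (ι → R)) : Set (ι → R)).MapsTo
      (π ∘ ·) (univ.filter fun y => diagForm (π ∘ a) y = π m) := fun x hx => by
    simp_all [← map_diagForm]
  simp only [Nat.card_eq_fintype_card, Fintype.card_subtype]
  rw [card_eq_sum_card_fiberwise hmaps, sum_mul, mul_comm, ← smul_eq_mul, ← sum_const]
  refine sum_congr rfl fun y hy => ?_
  obtain ⟨x₀, rfl⟩ : ∃ x₀, π ∘ x₀ = y := ⟨fun i => Function.surjInv hπ (y i),
    funext fun i => Function.surjInv_eq hπ (y i)⟩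
  obtain ⟨i₀, hi₀⟩ := hu x₀ (by simpa [map_diagForm] using hy)
  have := card_fiber_diagForm_mul_card_ker π hK (by simpa [map_diagForm] using hy) hi₀
  simp only [Nat.card_eq_fintype_card, Fintype.card_subtype] at this
  rwa [filter_filter]

end DiagonalForm

theorem RingHom.card_ker_mul_card_eq {R S : Type*} [Ring R] [Ring S] (f : R →+* S)
    (hf : Function.Surjective f) : Nat.card (RingHom.ker f) * Nat.card S = Nat.card R := by
  rw [AddSubgroup.card_eq_card_quotient_mul_card_addSubgroup f.toAddMonoidHom.ker,
    Nat.card_congr (QuotientAddGroup.quotientKerEquivOfSurjective _ hf).toEquiv, mul_comm]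
  rfl

namespace ZMod

theorem mul_self_eq_zero_of_mem_ker_castHom {n N : ℕ} [NeZero N] (h : n ∣ N) (hN : N ∣ n * n)
    {k : ZMod N} (hk : k ∈ RingHom.ker (castHom h (ZMod n))) : k * k = 0 := by
  rw [RingHom.mem_ker, castHom_apply, cast_eq_val, natCast_eq_zero_iff] at hk
  rw [← natCast_zmod_val k, ← Nat.cast_mul, natCast_eq_zero_iff]
  exact hN.trans (mul_dvd_mul hk hk)

variable {p : ℕ} [Fact p.Prime]

theorem card_ker_castHom_pow_succ (r : ℕ) :
    Nat.card (RingHom.ker (castHom (pow_dvd_pow p r.le_succ) (ZMod (p ^ r)))) = p := by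
  have h := RingHom.card_ker_mul_card_eq _ (castHom_surjective (pow_dvd_pow p r.le_succ))
  rw [Nat.card_zmod, Nat.card_zmod] at h
  exact Nat.eq_of_mul_eq_mul_right (pow_pos (Fact.out : p.Prime).pos r)
    (h.trans (pow_succ' p r))

theorem isUnit_iff_castHom_ne_zero {d : ℕ} (hd : d ≠ 0) (z : ZMod (p ^ d)) :
    IsUnit z ↔ castHom (dvd_pow_self p hd) (ZMod p) z ≠ 0 := by
  have : NeZero (p ^ d) := ⟨pow_ne_zero d (Fact.out : p.Prime).ne_zero⟩
  rw [← natCast_zmod_val z, isUnit_natCast_iff_not_dvd_pow Fact.out (Nat.pos_of_ne_zero hd),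
    map_natCast, Ne, natCast_eq_zero_iff]

theorem exists_isUnit_two_mul_of_castHom_diagForm {ι : Type*} [Fintype ι] (hp2 : p ≠ 2) {d : ℕ}
    (hd : d ≠ 0) {a x : ι → ZMod (p ^ d)} {m : ZMod (p ^ d)}
    (hm : castHom (dvd_pow_self p hd) (ZMod p) m ≠ 0)
    (h : castHom (dvd_pow_self p hd) (ZMod p) (diagForm a x) =
      castHom (dvd_pow_self p hd) (ZMod p) m) :
    ∃ i, IsUnit (2 * a i * x i) := by
  rw [← h, map_diagForm] at hm
  obtain ⟨i, -, hi⟩ := Finset.exists_ne_zero_of_sum_ne_zero hm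
  refine ⟨i, (isUnit_iff_castHom_ne_zero hd _).2 ?_⟩
  have h2 : (2 : ZMod p) ≠ 0 := Ring.two_ne_zero (by rwa [ringChar_zmod_n])
  simp only [map_mul, map_ofNat]
  exact mul_ne_zero (mul_ne_zero h2 (left_ne_zero_of_mul hi))
    (ne_zero_pow two_ne_zero (right_ne_zero_of_mul hi))

theorem card_diagForm_pow_succ {ι : Type*} [Fintype ι] [DecidableEq ι] (hp2 : p ≠ 2)
    (c : ι → ℤ) {m : ℤ} (hm : (m : ZMod p) ≠ 0) {r : ℕ} (hr : r ≠ 0) :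
    p * Nat.card {x : ι → ZMod (p ^ (r + 1)) //
        diagForm (fun i => (c i : ZMod (p ^ (r + 1)))) x = m} =
      p ^ Fintype.card ι *
        Nat.card {x : ι → ZMod (p ^ r) // diagForm (fun i => (c i : ZMod (p ^ r))) x = m} := by
  have : NeZero (p ^ (r + 1)) := ⟨pow_ne_zero _ (Fact.out : p.Prime).ne_zero⟩
  set π := castHom (pow_dvd_pow p r.le_succ) (ZMod (p ^ r))
  have hK (k) (hk : k ∈ RingHom.ker π) : k * k = 0 :=
    mul_self_eq_zero_of_mem_ker_castHom _ (by rw [← pow_add]; exact pow_dvd_pow p (by omega)) hk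
  have hu (x : ι → ZMod (p ^ (r + 1)))
      (hx : π (diagForm (fun i => (c i : ZMod (p ^ (r + 1)))) x) = π m) :
      ∃ i, IsUnit (2 * (c i : ZMod (p ^ (r + 1))) * x i) := by
    refine exists_isUnit_two_mul_of_castHom_diagForm hp2 r.succ_ne_zero (m := m)
      (by simpa using hm) ?_
    have := congrArg (castHom (dvd_pow_self p hr) (ZMod p)) hx
    rwa [← RingHom.comp_apply, ← RingHom.comp_apply, castHom_comp] at this
  have := card_diagForm_mul_card_ker π (castHom_surjective _) hK _ _ hu
  rw [card_ker_castHom_pow_succ] at this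
  simpa [mul_comm, Function.comp_def] using this

theorem quadraticChar_neg_one_eq_ite (hp2 : p ≠ 2) :
    quadraticChar (ZMod p) (-1) = if p % 4 = 1 then 1 else -1 := by
  rw [quadraticChar_neg_one (by rwa [ringChar_zmod_n]), card, χ₄_nat_eq_if_mod_four,
    if_neg (by rw [(Fact.out : p.Prime).mod_two_eq_one_iff_ne_two.2 hp2]; simp)]

end ZMod

theorem tendsto_div_pow_of_succ_eq_mul {u : ℕ → ℝ} {q : ℝ} (hq : q ≠ 0)
    (h : ∀ r ≥ 1, u (r + 1) = q * u r) : Tendsto (fun r => u r / q ^ r) atTop (𝓝 (u 1 / q)) := by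
  have hconst : ∀ r ≥ 1, u r / q ^ r = u 1 / q := by
    refine Nat.le_induction (by simp) fun r hr ih => ?_
    rw [h r hr, pow_succ, ← ih]
    field_simp
  exact tendsto_const_nhds.congr' (eventually_atTop.2 ⟨1, fun r hr => (hconst r hr).symm⟩)

section FiniteField

variable {F : Type*} [Field F] [Fintype F] [DecidableEq F]

theorem card_sq_eq (hF : ringChar F ≠ 2) (a : F) :
    (Nat.card {x : F // x ^ 2 = a} : ℤ) = quadraticChar F a + 1 := by
  rw [← quadraticChar_card_sqrts hF a, Set.toFinset_card, Nat.card_eq_fintype_card]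
  rfl

theorem sum_sq_eq_sum_quadraticChar (hF : ringChar F ≠ 2) (f : F → ℤ) :
    ∑ x : F, f (x ^ 2) = ∑ a : F, (quadraticChar F a + 1) * f a := by
  rw [← sum_fiberwise univ (fun x : F => x ^ 2) (fun x => f (x ^ 2))]
  refine sum_congr rfl fun a _ => ?_
  rw [sum_congr rfl fun x hx => by rw [(mem_filter.1 hx).2], sum_const, nsmul_eq_mul,
    ← card_sq_eq hF, Nat.card_eq_fintype_card, Fintype.card_subtype]

theorem sum_quadraticChar_mul_sub (hF : ringChar F ≠ 2) {c : F} (hc : c ≠ 0) :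
    ∑ a : F, quadraticChar F a * quadraticChar F (c - a) = -quadraticChar F (-1) := by
  have hJ : jacobiSum (quadraticChar F) (quadraticChar F) = -quadraticChar F (-1) := by
    simpa [(quadraticChar_isQuadratic F).inv] using
      jacobiSum_nontrivial_inv (quadraticChar_ne_one hF)
  rw [← Equiv.sum_comp (Equiv.mulLeft₀ c hc)]
  calc ∑ t : F, quadraticChar F (c * t) * quadraticChar F (c - c * t)
      = ∑ t : F, quadraticChar F c ^ 2 * (quadraticChar F t * quadraticChar F (1 - t)) :=
        sum_congr rfl fun t _ => by rw [← mul_one_sub, map_mul, map_mul]; ring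
    _ = -quadraticChar F (-1) := by
        rw [← mul_sum, ← jacobiSum, hJ, quadraticChar_sq_one hc, one_mul]

theorem sum_quadraticChar_mul_neg :
    ∑ a : F, quadraticChar F a * quadraticChar F (-a) =
      quadraticChar F (-1) * (Fintype.card F - 1) := by
  have hsq (a : F) : quadraticChar F a * quadraticChar F (-a) =
      quadraticChar F (-1) * (1 - if a = 0 then 1 else 0) := by
    split_ifs with ha
    · simp [ha]
    · rw [neg_eq_neg_one_mul, map_mul, sub_zero, mul_one, mul_left_comm, ← sq,
        quadraticChar_sq_one ha, mul_one]
  rw [sum_congr rfl fun a _ => hsq a, ← mul_sum, sum_sub_distrib]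
  simp

theorem card_sq_add_sq_eq (hF : ringChar F ≠ 2) (c : F) :
    (Nat.card {z : F × F // z.1 ^ 2 + z.2 ^ 2 = c} : ℤ) =
      Fintype.card F - quadraticChar F (-1) +
        if c = 0 then Fintype.card F * quadraticChar F (-1) else 0 := by
  have hfib (x : F) :
      (Nat.card {y : F // x ^ 2 + y ^ 2 = c} : ℤ) = quadraticChar F (c - x ^ 2) + 1 := by
    rw [← card_sq_eq hF]
    exact congrArg _ (Nat.card_congr (Equiv.subtypeEquivRight fun y => by
      rw [eq_sub_iff_add_eq']))
  have hshift : ∑ a : F, quadraticChar F (c - a) = 0 :=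
    (Equiv.sum_comp (Equiv.subLeft c) (quadraticChar F)).trans (quadraticChar_sum_zero hF)
  rw [Nat.card_congr (Equiv.subtypeProdEquivSigmaSubtype fun x y : F => x ^ 2 + y ^ 2 = c),
    Nat.card_sigma]
  push_cast
  simp only [hfib, sum_add_distrib,
    sum_sq_eq_sum_quadraticChar hF fun a => quadraticChar F (c - a), add_mul, one_mul, hshift,
    sum_const, card_univ, nsmul_eq_mul, mul_one, add_zero]
  split_ifs with hc
  · subst hc; simp only [zero_sub, sum_quadraticChar_mul_neg]; ring
  · rw [sum_quadraticChar_mul_sub hF hc]; ring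

theorem card_sq_add_sq_add_eq (hF : ringChar F ≠ 2) {β : Type*} [Fintype β] (g : β → F)
    (c : F) :
    (Nat.card {z : (F × F) × β // z.1.1 ^ 2 + z.1.2 ^ 2 + g z.2 = c} : ℤ) =
      Fintype.card β * (Fintype.card F - quadraticChar F (-1)) +
        Fintype.card F * quadraticChar F (-1) * Nat.card {w : β // g w = c} := by
  have hfib (w : β) : (Nat.card {u : F × F // u.1 ^ 2 + u.2 ^ 2 + g w = c} : ℤ) =
      Fintype.card F - quadraticChar F (-1) +
        if g w = c then Fintype.card F * quadraticChar F (-1) else 0 := by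
    rw [Nat.card_congr (Equiv.subtypeEquivRight fun u => eq_sub_iff_add_eq.symm),
      card_sq_add_sq_eq hF]
    simp only [sub_eq_zero, @eq_comm _ c]
  rw [Nat.card_congr ((Equiv.subtypeEquiv (Equiv.prodComm _ _)
      (p := fun z : (F × F) × β => z.1.1 ^ 2 + z.1.2 ^ 2 + g z.2 = c)
      (q := fun z : β × (F × F) => z.2.1 ^ 2 + z.2.2 ^ 2 + g z.1 = c) fun z => Iff.rfl).trans
      (Equiv.subtypeProdEquivSigmaSubtype
        fun (w : β) (u : F × F) => u.1 ^ 2 + u.2 ^ 2 + g w = c)),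
    Nat.card_sigma, Nat.card_eq_fintype_card (α := {w // _}), Fintype.card_subtype]
  push_cast
  simp only [hfib, sum_add_distrib, sum_const, card_univ, nsmul_eq_mul, sum_ite]
  ring

theorem card_quaternary_eq (hF : ringChar F ≠ 2) (e₃ e₄ c : F) :
    (Nat.card {v : Fin 4 → F // v 0 ^ 2 + v 1 ^ 2 + e₃ * v 2 ^ 2 + e₄ * v 3 ^ 2 = c} : ℤ) =
      Fintype.card F ^ 2 * (Fintype.card F - quadraticChar F (-1)) +
        Fintype.card F * quadraticChar F (-1) *
          Nat.card {w : F × F // e₃ * w.1 ^ 2 + e₄ * w.2 ^ 2 = c} := by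
  let e : (Fin 4 → F) ≃ (F × F) × (F × F) :=
    { toFun := fun v => ((v 0, v 1), (v 2, v 3))
      invFun := fun z => ![z.1.1, z.1.2, z.2.1, z.2.2]
      left_inv := fun v => funext fun i => by fin_cases i <;> rfl
      right_inv := fun z => rfl }
  have h := card_sq_add_sq_add_eq hF (fun w : F × F => e₃ * w.1 ^ 2 + e₄ * w.2 ^ 2) c
  beta_reduce at h
  rw [Nat.card_congr (Equiv.subtypeEquiv e
      (q := fun z => z.1.1 ^ 2 + z.1.2 ^ 2 + (e₃ * z.2.1 ^ 2 + e₄ * z.2.2 ^ 2) = c)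
      fun v => by rw [add_assoc]; rfl), h, Fintype.card_prod]
  push_cast
  ring

theorem card_mul_sq_eq (hF : ringChar F ≠ 2) {a : F} (ha : a ≠ 0) (c : F) :
    (Nat.card {x : F // a ^ 2 * x ^ 2 = c} : ℤ) = quadraticChar F c + 1 := by
  rw [← card_sq_eq hF]
  exact congrArg _ (Nat.card_congr (Equiv.subtypeEquiv (Equiv.mulLeft₀ a ha) fun x => by
    simp [mul_pow]))

end FiniteField

section Quaternary

variable {p : ℕ} (d₃ d₄ : ℕ)

theorem quaternaryLocalCount_eq_card_diagForm (r : ℕ) (m : ℤ) :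
    quaternaryLocalCount p r d₃ d₄ m = Nat.card {x : Fin 4 → ZMod (p ^ r) //
      diagForm (fun i => ((![1, 1, (d₃ : ℤ) ^ 2, (d₄ : ℤ) ^ 2] i : ℤ) : ZMod (p ^ r))) x = m} :=
  Nat.card_congr (Equiv.subtypeEquivRight fun v => by simp [diagForm, Fin.sum_univ_four])

theorem quaternaryLocalCount_succ [Fact p.Prime] (hp2 : p ≠ 2) {m : ℤ} (hm : (m : ZMod p) ≠ 0)
    {r : ℕ} (hr : r ≠ 0) :
    quaternaryLocalCount p (r + 1) d₃ d₄ m = p ^ 3 * quaternaryLocalCount p r d₃ d₄ m := by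
  have h := ZMod.card_diagForm_pow_succ hp2 ![1, 1, (d₃ : ℤ) ^ 2, (d₄ : ℤ) ^ 2] hm hr
  rw [← quaternaryLocalCount_eq_card_diagForm, ← quaternaryLocalCount_eq_card_diagForm,
    Fintype.card_fin, pow_succ' p 3, mul_assoc] at h
  exact Nat.eq_of_mul_eq_mul_left (Fact.out : p.Prime).pos h

theorem tendsto_quaternaryLocalCount [Fact p.Prime] (hp2 : p ≠ 2) {m : ℤ}
    (hm : (m : ZMod p) ≠ 0) :
    Tendsto (fun r => (quaternaryLocalCount p r d₃ d₄ m : ℝ) / (p : ℝ) ^ (3 * r)) atTop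
      (𝓝 ((quaternaryLocalCount p 1 d₃ d₄ m : ℝ) / (p : ℝ) ^ 3)) := by
  have hp : (p : ℝ) ^ 3 ≠ 0 := pow_ne_zero 3 (Nat.cast_ne_zero.2 (Fact.out : p.Prime).ne_zero)
  simpa only [pow_mul] using tendsto_div_pow_of_succ_eq_mul hp fun r hr => by
    rw [quaternaryLocalCount_succ d₃ d₄ hp2 hm (by omega)]; push_cast; rfl

theorem quaternaryLocalCount_comm (r : ℕ) (m : ℤ) :
    quaternaryLocalCount p r d₃ d₄ m = quaternaryLocalCount p r d₄ d₃ m :=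
  Nat.card_congr (Equiv.subtypeEquiv ((Equiv.swap (2 : Fin 4) 3).arrowCongr (Equiv.refl _))
    fun v => by simp [Equiv.swap_apply_of_ne_of_ne, add_right_comm])

theorem quaternaryLocalCount_one [Fact p.Prime] (hp2 : p ≠ 2) (m : ℤ) :
    (quaternaryLocalCount p 1 d₃ d₄ m : ℤ) =
      p ^ 2 * (p - quadraticChar (ZMod p) (-1)) + p * quadraticChar (ZMod p) (-1) *
        Nat.card {w : ZMod p × ZMod p //
          (d₃ : ZMod p) ^ 2 * w.1 ^ 2 + (d₄ : ZMod p) ^ 2 * w.2 ^ 2 = m} := by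
  have hF : ringChar (ZMod p) ≠ 2 := by rwa [ZMod.ringChar_zmod_n]
  unfold quaternaryLocalCount
  rw [pow_one, card_quaternary_eq hF, ZMod.card]

theorem quaternaryLocalCount_one_one_one [Fact p.Prime] (hp2 : p ≠ 2) {m : ℤ}
    (hm : (m : ZMod p) ≠ 0) :
    (quaternaryLocalCount p 1 1 1 m : ℤ) = p ^ 3 - p := by
  have hF : ringChar (ZMod p) ≠ 2 := by rwa [ZMod.ringChar_zmod_n]
  have hχ := quadraticChar_sq_one (F := ZMod p) (neg_ne_zero.2 one_ne_zero)
  rw [quaternaryLocalCount_one 1 1 hp2]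
  simp only [Nat.cast_one, one_pow, one_mul]
  rw [card_sq_add_sq_eq hF, if_neg hm, ZMod.card]
  linear_combination (-(p : ℤ)) * hχ

theorem quaternaryLocalCount_one_of_not_dvd_of_dvd [Fact p.Prime] (hp2 : p ≠ 2) (h₃ : ¬p ∣ d₃)
    (h₄ : p ∣ d₄) (m : ℤ) :
    (quaternaryLocalCount p 1 d₃ d₄ m : ℤ) =
      p ^ 3 + quadraticChar (ZMod p) (-1) * quadraticChar (ZMod p) m * p ^ 2 := by
  have hF : ringChar (ZMod p) ≠ 2 := by rwa [ZMod.ringChar_zmod_n]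
  have h₃' : (d₃ : ZMod p) ≠ 0 := by rwa [Ne, ZMod.natCast_eq_zero_iff]
  rw [quaternaryLocalCount_one d₃ d₄ hp2, (ZMod.natCast_eq_zero_iff d₄ p).2 h₄]
  simp only [ne_eq, OfNat.ofNat_ne_zero, not_false_eq_true, zero_pow, zero_mul, add_zero]
  rw [Nat.card_congr (Equiv.prodSubtypeFstEquivSubtypeProd
      (p := fun x : ZMod p => (d₃ : ZMod p) ^ 2 * x ^ 2 = m)), Nat.card_prod, Nat.card_zmod]
  push_cast
  rw [card_mul_sq_eq hF h₃']
  ring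

theorem quaternaryLocalCount_one_of_dvd_mul [Fact p.Prime] (hp2 : p ≠ 2) (hpd : p ∣ d₃ * d₄)
    (hp2d : ¬p ^ 2 ∣ d₃ * d₄) (m : ℤ) :
    (quaternaryLocalCount p 1 d₃ d₄ m : ℤ) =
      p ^ 3 + quadraticChar (ZMod p) (-1) * quadraticChar (ZMod p) m * p ^ 2 := by
  rcases (Nat.Prime.dvd_mul Fact.out).1 hpd with h₃ | h₄
  · rw [quaternaryLocalCount_comm]
    exact quaternaryLocalCount_one_of_not_dvd_of_dvd d₄ d₃ hp2
      (fun h₄ => hp2d (sq p ▸ mul_dvd_mul h₃ h₄)) h₃ m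
  · exact quaternaryLocalCount_one_of_not_dvd_of_dvd d₃ d₄ hp2
      (fun h₃ => hp2d (sq p ▸ mul_dvd_mul h₃ h₄)) h₄ m

end Quaternary

theorem quaternary_density_ratio_coprime_general (p : ℕ) [Fact p.Prime] (hp2 : p ≠ 2)
    (m : ℕ) (hpm : ¬ p ∣ m) (d₃ d₄ : ℕ)
    (hpd : p ∣ d₃ * d₄) (hp2d : ¬ p ^ 2 ∣ d₃ * d₄) (ε : ℝ)
    (hε : ε = if p % 4 = 1 then 1 else -1) :
    ∃ L : ℝ,
      Tendsto (fun r : ℕ =>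
          (quaternaryLocalCount p r 1 1 (m : ℤ) : ℝ) / (p : ℝ) ^ (3 * r))
        atTop (nhds L) ∧
      Tendsto (fun r : ℕ =>
          (quaternaryLocalCount p r d₃ d₄ (m : ℤ) : ℝ) / (p : ℝ) ^ (3 * r))
        atTop (nhds
          ((1 + ε * (legendreSym p m : ℝ) * (p : ℝ)⁻¹) / (1 - ((p : ℝ) ^ 2)⁻¹) * L)) := by
  have hm' : ((m : ℤ) : ZMod p) ≠ 0 := by simpa [ZMod.natCast_eq_zero_iff] using hpm
  have hχε : (quadraticChar (ZMod p) (-1) : ℝ) = ε := by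
    rw [ZMod.quadraticChar_neg_one_eq_ite hp2, hε]
    split_ifs <;> simp
  have h₁ : (quaternaryLocalCount p 1 1 1 m : ℝ) = p ^ 3 - p := by
    exact_mod_cast quaternaryLocalCount_one_one_one hp2 hm'
  have h₂ : (quaternaryLocalCount p 1 d₃ d₄ m : ℝ) = p ^ 3 + ε * legendreSym p m * p ^ 2 := by
    rw [← hχε, legendreSym]
    exact_mod_cast quaternaryLocalCount_one_of_dvd_mul d₃ d₄ hp2 hpd hp2d m
  refine ⟨_, tendsto_quaternaryLocalCount 1 1 hp2 hm', ?_⟩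
  convert tendsto_quaternaryLocalCount d₃ d₄ hp2 hm' using 2
  have hp : (p : ℝ) ≠ 0 := Nat.cast_ne_zero.2 (Fact.out : p.Prime).ne_zero
  have hp1 : (p : ℝ) ^ 2 - 1 ≠ 0 := by
    have : (2 : ℝ) ≤ p := by exact_mod_cast (Fact.out : p.Prime).two_le
    nlinarith
  rw [h₁, h₂]
  field_simp

/-- **The ratio `ω₁(m, p)` of local densities, case `p ∤ m`.**
Let `p` be an odd prime, `m` a positive integer with `p ∤ m`, and `d₃, d₄` positive
integers with `p ∥ d₃ d₄` (exact first power). Set `ε = 1` if `p ≡ 1 (mod 4)` and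
`ε = −1` if `p ≡ 3 (mod 4)`. Then both local densities exist and that of
`x₁² + x₂² + d₃²x₃² + d₄²x₄²` equals `ω₁ = (1 + ε (m/p) p⁻¹)/(1 − p⁻²)` times that of
`x₁² + x₂² + x₃² + x₄²`, where `(m/p)` is the Legendre symbol. -/
theorem quaternary_density_ratio_coprime (p : ℕ) [Fact p.Prime] (hp2 : p ≠ 2)
    (m : ℕ) (hm : 0 < m) (hpm : ¬ p ∣ m) (d₃ d₄ : ℕ) (hd₃ : 0 < d₃) (hd₄ : 0 < d₄)
    (hpd : p ∣ d₃ * d₄) (hp2d : ¬ p ^ 2 ∣ d₃ * d₄) (ε : ℝ)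
    (hε : ε = if p % 4 = 1 then 1 else -1) :
    ∃ L : ℝ,
      Tendsto (fun r : ℕ =>
          (quaternaryLocalCount p r 1 1 (m : ℤ) : ℝ) / (p : ℝ) ^ (3 * r))
        atTop (nhds L) ∧
      Tendsto (fun r : ℕ =>
          (quaternaryLocalCount p r d₃ d₄ (m : ℤ) : ℝ) / (p : ℝ) ^ (3 * r))
        atTop (nhds
          ((1 + ε * (legendreSym p m : ℝ) * (p : ℝ)⁻¹) / (1 - ((p : ℝ) ^ 2)⁻¹) * L)) :=
  quaternary_density_ratio_coprime_general p hp2 m hpm d₃ d₄ hpd hp2d ε hε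
end

section
/- Let p be an odd prime and m a positive integer, and define Ω(m,p) := 2·ω₁(m,p) − ω₂(m,p)/p, with ω₁ and ω₂ as given below. Then Ω(m,p) ≤ 2 + (p+3)/(p²−1) if p ∤ m, and Ω(m,p) ≤ 2 if p ∣ m. In particular, Ω(m,p) ≤ 5/2 for every odd prime p ≥ 5. -/
/-- `ε(p) = 1` if `p ≡ 1 (mod 4)`, `ε(p) = −1` if `p ≡ 3 (mod 4)`. -/
noncomputable def epsP (p : ℕ) : ℝ := if p % 4 = 1 then 1 else -1

/-- The local density ratio `ω₁(m, p)`: equal to `(1 + ε(p)(m/p)p⁻¹)/(1 − p⁻²)` when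
`p ∤ m`, and to `(1 − p^(−R))/(1 − p^(−R−1))` when `p^R ∥ m` with `R ≥ 1`.  Here `(m/p)`
is the Legendre (Jacobi) symbol and `R = m.factorization p`. -/
noncomputable def omega1 (m p : ℕ) : ℝ :=
  if p ∣ m then
    (1 - (p : ℝ) ^ (-(m.factorization p : ℤ))) /
      (1 - (p : ℝ) ^ (-(m.factorization p : ℤ) - 1))
  else
    (1 + epsP p * (jacobiSym m p : ℝ) * (p : ℝ)⁻¹) / (1 - ((p : ℝ) ^ 2)⁻¹)

/-- The local density ratio `ω₂(m, p)`: equal to `(1 − ε(p)p⁻¹)/(1 − p⁻²)` when `p ∤ m`,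
and to `((1 − p⁻¹)(1 + ε(p)) + (1 + p⁻¹)(1 − p^(1−R)))/((1 + p⁻¹)(1 − p^(−R−1)))` when
`p^R ∥ m` with `R ≥ 1`. -/
noncomputable def omega2 (m p : ℕ) : ℝ :=
  if p ∣ m then
    ((1 - (p : ℝ)⁻¹) * (1 + epsP p)
        + (1 + (p : ℝ)⁻¹) * (1 - (p : ℝ) ^ (1 - (m.factorization p : ℤ)))) /
      ((1 + (p : ℝ)⁻¹) * (1 - (p : ℝ) ^ (-(m.factorization p : ℤ) - 1)))
  else
    (1 - epsP p * (p : ℝ)⁻¹) / (1 - ((p : ℝ) ^ 2)⁻¹)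

/-- `Ω(m, p) := 2 ω₁(m, p) − ω₂(m, p)/p`. -/
noncomputable def bigOmegaRatio (m p : ℕ) : ℝ := 2 * omega1 m p - omega2 m p / p

/-! Both bounds come from bounding the two terms of `Ω = 2ω₁ − ω₂/p` separately.
If `p ∤ m`, then `|ε(p)(m/p)| ≤ 1` gives `ω₁ ≤ (1 + p⁻¹)/(1 − p⁻²) = p/(p − 1)` and
`ε(p) ≤ 1` gives `ω₂ ≥ (1 − p⁻¹)/(1 − p⁻²) = p/(p + 1)`, so
`Ω ≤ 2p/(p − 1) − 1/(p + 1) = 2 + (p + 3)/(p² − 1)`.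
If `p ∣ m`, then `ω₁ = (1 − p^(−R))/(1 − p^(−R−1)) ≤ 1`, while `ω₂ ≥ 0` because `R ≥ 1`
makes `1 − p^(1−R)` nonnegative, so `Ω ≤ 2`. -/

lemma abs_epsP (p : ℕ) : |epsP p| = 1 := by
  unfold epsP
  split_ifs <;> simp

lemma neg_one_le_epsP (p : ℕ) : -1 ≤ epsP p := (abs_le.1 (abs_epsP p).le).1

lemma epsP_le_one (p : ℕ) : epsP p ≤ 1 := (abs_le.1 (abs_epsP p).le).2

lemma abs_jacobiSym_le_one (a : ℤ) (b : ℕ) : |(jacobiSym a b : ℝ)| ≤ 1 := by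
  rcases jacobiSym.trichotomy a b with h | h | h <;> simp [h]

lemma epsP_mul_jacobiSym_le_one (a : ℤ) (p : ℕ) : epsP p * jacobiSym a p ≤ 1 :=
  (le_abs_self _).trans <| by
    rw [abs_mul, abs_epsP, one_mul]
    exact abs_jacobiSym_le_one a p

section Real

variable {x : ℝ}

lemma one_sub_inv_sq_pos (hx : 1 < x) : 0 < 1 - (x ^ 2)⁻¹ :=
  sub_pos.2 (inv_lt_one_of_one_lt₀ (one_lt_pow₀ hx two_ne_zero))

lemma one_add_inv_div_one_sub_inv_sq (hx : 1 < x) :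
    (1 + x⁻¹) / (1 - (x ^ 2)⁻¹) = x / (x - 1) := by
  have : x ^ 2 - 1 ≠ 0 := by nlinarith
  field_simp [(sub_pos.2 hx).ne']
  ring

lemma one_sub_inv_div_one_sub_inv_sq (hx : 1 < x) :
    (1 - x⁻¹) / (1 - (x ^ 2)⁻¹) = x / (x + 1) := by
  have : x ^ 2 - 1 ≠ 0 := by nlinarith
  field_simp [(sub_pos.2 hx).ne']
  ring

end Real

section NotDvd

variable {m p : ℕ}

lemma omega1_le_of_not_dvd (hp : 1 < p) (h : ¬p ∣ m) : omega1 m p ≤ p / (p - 1) := by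
  have hp' : (1 : ℝ) < p := by exact_mod_cast hp
  have := one_sub_inv_sq_pos hp'
  rw [omega1, if_neg h, ← one_add_inv_div_one_sub_inv_sq hp']
  gcongr
  exact mul_le_of_le_one_left (by positivity) (epsP_mul_jacobiSym_le_one m p)

lemma div_add_one_le_omega2_of_not_dvd (hp : 1 < p) (h : ¬p ∣ m) :
    p / (p + 1) ≤ omega2 m p := by
  have hp' : (1 : ℝ) < p := by exact_mod_cast hp
  have := one_sub_inv_sq_pos hp'
  rw [omega2, if_neg h, ← one_sub_inv_div_one_sub_inv_sq hp']
  gcongr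
  exact mul_le_of_le_one_left (by positivity) (epsP_le_one p)

lemma bigOmegaRatio_le_of_not_dvd (hp : 1 < p) (h : ¬p ∣ m) :
    bigOmegaRatio m p ≤ 2 + ((p : ℝ) + 3) / ((p : ℝ) ^ 2 - 1) := by
  have hp' : (1 : ℝ) < p := by exact_mod_cast hp
  calc bigOmegaRatio m p ≤ 2 * (p / (p - 1)) - p / (p + 1) / p := by
        unfold bigOmegaRatio
        gcongr
        · exact omega1_le_of_not_dvd hp h
        · exact div_add_one_le_omega2_of_not_dvd hp h
    _ = 2 + ((p : ℝ) + 3) / ((p : ℝ) ^ 2 - 1) := by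
        have : (p : ℝ) ^ 2 - 1 ≠ 0 := by nlinarith
        field_simp [(sub_pos.2 hp').ne']
        ring

end NotDvd

section Dvd

variable {m p : ℕ}

lemma omega1_le_one_of_dvd (hp : 1 < p) (h : p ∣ m) : omega1 m p ≤ 1 := by
  have hp' : (1 : ℝ) < p := by exact_mod_cast hp
  set R := m.factorization p
  have hmono : (p : ℝ) ^ (-(R : ℤ) - 1) ≤ (p : ℝ) ^ (-(R : ℤ)) :=
    zpow_le_zpow_right₀ hp'.le (by omega)
  have hlt : (p : ℝ) ^ (-(R : ℤ) - 1) < 1 := zpow_lt_one_of_neg₀ hp' (by omega)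
  rw [omega1, if_pos h]
  exact div_le_one_of_le₀ (by linarith) (by linarith)

lemma omega2_nonneg_of_dvd (hp : p.Prime) (hm : m ≠ 0) (h : p ∣ m) : 0 ≤ omega2 m p := by
  have hp' : (1 : ℝ) < p := by exact_mod_cast hp.one_lt
  have hR : 1 ≤ m.factorization p := hp.factorization_pos_of_dvd hm h
  set R := m.factorization p
  have hinv : (p : ℝ)⁻¹ ≤ 1 := inv_le_one_of_one_le₀ hp'.le
  have hinv' : 0 ≤ (p : ℝ)⁻¹ := by positivity
  have hpow : (p : ℝ) ^ (1 - (R : ℤ)) ≤ 1 := zpow_le_one_of_nonpos₀ hp'.le (by omega)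
  have hpow' : (p : ℝ) ^ (-(R : ℤ) - 1) < 1 := zpow_lt_one_of_neg₀ hp' (by omega)
  have hε := neg_one_le_epsP p
  rw [omega2, if_pos h]
  apply div_nonneg
  · apply add_nonneg <;> apply mul_nonneg <;> linarith
  · apply mul_nonneg <;> linarith

lemma bigOmegaRatio_le_two_of_dvd (hp : p.Prime) (hm : m ≠ 0) (h : p ∣ m) :
    bigOmegaRatio m p ≤ 2 := by
  have h₁ := omega1_le_one_of_dvd hp.one_lt h
  have h₂ := div_nonneg (omega2_nonneg_of_dvd hp hm h) (Nat.cast_nonneg (α := ℝ) p)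
  unfold bigOmegaRatio
  linarith

end Dvd

theorem bigOmegaRatio_bound_general (p m : ℕ) (hp : p.Prime) (hm : 0 < m) :
    (¬ p ∣ m → bigOmegaRatio m p ≤ 2 + ((p : ℝ) + 3) / ((p : ℝ) ^ 2 - 1)) ∧
    (p ∣ m → bigOmegaRatio m p ≤ 2) ∧
    (5 ≤ p → bigOmegaRatio m p ≤ 5 / 2) := by
  have coprime_case := fun h => bigOmegaRatio_le_of_not_dvd (m := m) hp.one_lt h
  have dvd_case := fun h => bigOmegaRatio_le_two_of_dvd hp hm.ne' h
  refine ⟨coprime_case, dvd_case, fun hp5 => ?_⟩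
  by_cases h : p ∣ m
  · linarith [dvd_case h]
  · have hp5' : (5 : ℝ) ≤ p := by exact_mod_cast hp5
    have : ((p : ℝ) + 3) / ((p : ℝ) ^ 2 - 1) ≤ 1 / 2 := by
      rw [div_le_div_iff₀ (by nlinarith) two_pos]
      nlinarith
    linarith [coprime_case h]

/-- **Bound for `Ω(m, p)`.** For an odd prime `p` and a positive integer `m`:
`Ω(m,p) ≤ 2 + (p+3)/(p²−1)` if `p ∤ m`, `Ω(m,p) ≤ 2` if `p ∣ m`, and in particular
`Ω(m,p) ≤ 5/2` whenever `p ≥ 5`. -/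
theorem bigOmegaRatio_bound (p m : ℕ) (hp : p.Prime) (hp2 : p ≠ 2) (hm : 0 < m) :
    (¬ p ∣ m → bigOmegaRatio m p ≤ 2 + ((p : ℝ) + 3) / ((p : ℝ) ^ 2 - 1)) ∧
    (p ∣ m → bigOmegaRatio m p ≤ 2) ∧
    (5 ≤ p → bigOmegaRatio m p ≤ 5 / 2) :=
  bigOmegaRatio_bound_general p m hp hm
end

section
/- Let m be a positive integer and let w, z₀ be real numbers with 3 < w ≤ z₀. Then the product over all primes p with w ≤ p < z₀ of (1 − ω₁(m,p)/p)^{−1} is at most (log z₀ / log w)·(1 + 6/log w), where ω₁ is as given below. -/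
/-! Since `ω₁(m, p) ≤ p / (p - 1)` for every prime `p`, each factor of the product is at
most `1 + 1 / (p - 2) ≤ exp (1 / (p - 2))`, and as the primes `p ≥ w` are odd,
`∑ (1 / (p - 2) - 1 / p)` telescopes to at most `1 / (w - 2)`.

The sum `∑_{w ≤ p < z} 1 / p` is bounded by partial summation from the explicit Mertens bounds
`log (n + 1) - 2.19 ≤ ∑_{p ≤ n} log p / p ≤ log n + log 2 / 2 + log 3 / 3` (for `n ≥ 4`),
which follow from Legendre's formula for `n!`, Stirling's bounds and Chebyshev's
`θ(n) ≤ n log 4`. This gives `∑ 1 / p ≤ log log z - log log w + 1 - ℓ / log w` with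
`ℓ = ∑_{5 ≤ p < w} log p / p`, and what remains,
`exp (1 - ℓ / log w + 1 / (w - 2)) ≤ 1 + 6 / log w`, is numerical: `ℓ ≥ 0` suffices for
`w < 17`, and `ℓ ≥ log w - 2.91` beyond.
-/

open Finset Real
open scoped Nat

lemma omega1_le (m : ℕ) {p : ℕ} (hp : p.Prime) : omega1 m p ≤ p / (p - 1) := by
  have hp1 : (1 : ℝ) < p := mod_cast hp.one_lt
  have hp1' : (p : ℝ) - 1 ≠ 0 := by linarith
  have h1 : (1 : ℝ) ≤ p / (p - 1) := by rw [le_div_iff₀ (by linarith)]; linarith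
  unfold omega1
  split_ifs with hdvd
  · set R : ℤ := (m.factorization p : ℤ)
    have hlt : (p : ℝ) ^ (-R - 1) < 1 := zpow_lt_one_of_neg₀ hp1 (by omega)
    have hle : (p : ℝ) ^ (-R - 1) ≤ (p : ℝ) ^ (-R) := zpow_le_zpow_right₀ hp1.le (by omega)
    exact (div_le_one_of_le₀ (by linarith) (by linarith)).trans h1
  · have heps : |epsP p| = 1 := by unfold epsP; split_ifs <;> simp
    have hJ : |(jacobiSym m p : ℝ)| ≤ 1 := by
      rcases jacobiSym.trichotomy m p with h | h | h <;> simp [h]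
    have hprod : epsP p * jacobiSym m p ≤ 1 :=
      (le_abs_self _).trans (by rw [abs_mul, heps, one_mul]; exact hJ)
    have hden : 0 < 1 - ((p : ℝ) ^ 2)⁻¹ := by
      rw [sub_pos, inv_lt_one₀ (by positivity)]; nlinarith
    calc (1 + epsP p * jacobiSym m p * (p : ℝ)⁻¹) / (1 - ((p : ℝ) ^ 2)⁻¹)
        ≤ (1 + (p : ℝ)⁻¹) / (1 - ((p : ℝ) ^ 2)⁻¹) := by
          gcongr
          nlinarith [inv_pos.mpr (by linarith : (0 : ℝ) < p)]
      _ = p / (p - 1) := by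
          rw [div_eq_div_iff hden.ne' hp1']
          field_simp
          ring

lemma one_sub_div_pos_of_le {x p : ℝ} (hp : 2 < p) (hx : x ≤ p / (p - 1)) : 0 < 1 - x / p := by
  rw [sub_pos, div_lt_one (by linarith)]
  calc x ≤ p / (p - 1) := hx
    _ < p := by rw [div_lt_iff₀ (by linarith)]; nlinarith

lemma inv_one_sub_div_le {x p : ℝ} (hp : 2 < p) (hx : x ≤ p / (p - 1)) :
    (1 - x / p)⁻¹ ≤ 1 + 1 / (p - 2) := by
  have hp1 : p - 1 ≠ 0 := by linarith
  have hp2 : p - 2 ≠ 0 := by linarith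
  have hlow : (p - 2) / (p - 1) ≤ 1 - x / p := by
    have : x / p ≤ 1 / (p - 1) := by
      rw [div_le_div_iff₀ (by linarith) (by linarith)]
      calc x * (p - 1) ≤ p / (p - 1) * (p - 1) := by gcongr; linarith
        _ = 1 * p := by field_simp
    calc (p - 2) / (p - 1) = 1 - 1 / (p - 1) := by field_simp; ring
      _ ≤ 1 - x / p := by linarith
  calc (1 - x / p)⁻¹ ≤ ((p - 2) / (p - 1))⁻¹ :=
        inv_anti₀ (by apply div_pos <;> linarith) hlow
    _ = 1 + 1 / (p - 2) := by field_simp; ring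

lemma prod_inv_one_sub_omega1_div_le_exp (m : ℕ) {S : Finset ℕ}
    (hS : ∀ p ∈ S, p.Prime ∧ 3 ≤ p) :
    ∏ p ∈ S, (1 - omega1 m p / p)⁻¹ ≤ exp (∑ p ∈ S, 1 / ((p : ℝ) - 2)) := by
  rw [exp_sum]
  refine prod_le_prod (fun p hp => ?_) (fun p hp => ?_)
  all_goals
    obtain ⟨hp, hp3⟩ := hS p hp
    have hp2 : (2 : ℝ) < p := by exact_mod_cast hp3
  · exact (inv_pos.2 (one_sub_div_pos_of_le hp2 (omega1_le m hp))).le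
  · exact (inv_one_sub_div_le hp2 (omega1_le m hp)).trans
      (by linarith [add_one_le_exp (1 / ((p : ℝ) - 2))])

lemma sum_inv_sub_two_sub_inv_le {x y : ℝ} (hx : 2 < x) {S : Finset ℕ}
    (hS : ∀ p ∈ S, Odd p ∧ x ≤ p ∧ (p : ℝ) ≤ y) (hxy : x - 2 ≤ y) :
    ∑ p ∈ S, (1 / ((p : ℝ) - 2) - 1 / p) ≤ 1 / (x - 2) - 1 / y := by
  induction S using Finset.induction_on_max generalizing y with
  | empty =>
    rw [sum_empty, sub_nonneg]
    exact one_div_le_one_div_of_le (by linarith) hxy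
  | insert a s hlt ih =>
    obtain ⟨ha, hxa, hay⟩ := hS a (mem_insert_self a s)
    have hs : ∀ p ∈ s, Odd p ∧ x ≤ p ∧ (p : ℝ) ≤ a - 2 := by
      intro p hp
      obtain ⟨hpo, hxp, -⟩ := hS p (mem_insert_of_mem hp)
      have : p + 2 ≤ a := by
        have := hlt p hp
        obtain ⟨i, rfl⟩ := hpo
        obtain ⟨j, rfl⟩ := ha
        omega
      exact ⟨hpo, hxp, by rw [le_sub_iff_add_le]; exact_mod_cast this⟩
    rw [sum_insert fun h => (hlt a h).false]
    have := ih hs (by linarith)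
    have : 1 / y ≤ 1 / (a : ℝ) := one_div_le_one_div_of_le (by linarith) hay
    linarith

lemma sub_mul_inv_sub_inv_le {u v ℓ : ℝ} (hu : 0 < u) (huv : u ≤ v) :
    (u - ℓ) * (u⁻¹ - v⁻¹) ≤ (log v + ℓ / v) - (log u + ℓ / u) := by
  have hv : 0 < v := hu.trans_le huv
  have h := one_sub_inv_le_log_of_pos (div_pos hv hu)
  rw [inv_div, log_div hv.ne' hu.ne'] at h
  have : (u - ℓ) * (u⁻¹ - v⁻¹) = 1 - u / v + (ℓ / v - ℓ / u) := by field_simp; ring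
  linarith

lemma log_log_add_div_log_le {x y ℓ : ℝ} (hx : 1 < x) (hxy : x ≤ y) (hℓ : ℓ ≤ log x) :
    log (log x) + ℓ / log x ≤ log (log y) + ℓ / log y := by
  have hLx := log_pos hx
  have hLxy := log_le_log (by linarith) hxy
  have := sub_mul_inv_sub_inv_le hLx hLxy (ℓ := ℓ)
  nlinarith [sub_nonneg.2 (inv_anti₀ hLx hLxy)]

lemma sum_Ioc_div_log_le (a : ℕ → ℝ) (ℓ : ℝ) {m N : ℕ} (hm : 1 ≤ m) (hmN : m < N)
    (hA : ∀ n ∈ Ioc m N, ∑ k ∈ Ioc m n, a k ≤ log n - ℓ) :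
    ∑ k ∈ Ioc m N, a k / log k ≤
      log (log N) - log (log (m + 1 : ℕ)) + 1 - ℓ / log (m + 1 : ℕ) := by
  have hlog : ∀ n : ℕ, m < n → 0 < log (n : ℝ) := fun n hn =>
    log_pos (by exact_mod_cast (by omega : 1 < n))
  -- Abel summation, with `log (log n) + ℓ / log n` as a telescoping majorant
  have key : ∀ n, m + 1 ≤ n → n ≤ N →
      ∑ k ∈ Ioc m n, a k / log k - (∑ k ∈ Ioc m n, a k) / log n ≤
        (log (log n) + ℓ / log n) - (log (log (m + 1 : ℕ)) + ℓ / log (m + 1 : ℕ)) := by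
    intro n hn
    induction n, hn using Nat.le_induction with
    | base => intro _; simp [Nat.Ioc_succ_singleton]
    | succ n hmn ih =>
      intro hnN
      set L := log (n : ℝ)
      set L' := log ((n + 1 : ℕ) : ℝ)
      set A := ∑ k ∈ Ioc m n, a k
      have hL : 0 < L := hlog n (by omega)
      have hLL : L ≤ L' := log_le_log (by exact_mod_cast (by omega : 0 < n)) (by simp)
      have hstep := sub_mul_inv_sub_inv_le hL hLL (ℓ := ℓ)
      have hA' : A * (L⁻¹ - L'⁻¹) ≤ (L - ℓ) * (L⁻¹ - L'⁻¹) :=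
        mul_le_mul_of_nonneg_right (hA n (mem_Ioc.2 ⟨by omega, by omega⟩))
          (sub_nonneg.2 (inv_anti₀ hL hLL))
      have := ih (by omega)
      rw [sum_Ioc_succ_top (by omega), sum_Ioc_succ_top (by omega)]
      have e : ∑ k ∈ Ioc m n, a k / log k + a (n + 1) / L' - (A + a (n + 1)) / L' =
          (∑ k ∈ Ioc m n, a k / log k - A / L) + A * (L⁻¹ - L'⁻¹) := by ring
      rw [e]
      linarith
  have hN := hlog N hmN
  have hAN := div_le_div_of_nonneg_right (hA N (mem_Ioc.2 ⟨hmN, le_rfl⟩)) hN.le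
  rw [sub_div, div_self hN.ne'] at hAN
  linarith [key N (by omega) le_rfl]

lemma log_factorial_eq_sum (n : ℕ) :
    log (n ! : ℝ) = ∑ p ∈ n.primesLE, (n !).factorization p * log p := by
  rw [log_nat_eq_sum_factorization]
  refine Finsupp.sum_of_support_subset _ (fun p hp => ?_) _ (fun _ _ => by simp)
  rw [Nat.support_factorization, Nat.mem_primeFactors] at hp
  exact Nat.mem_primesLE.2 ⟨(hp.1.dvd_factorial).1 hp.2.1, hp.1⟩

lemma div_le_factorization_factorial {p : ℕ} (hp : p.Prime) (n : ℕ) :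
    n / p ≤ (n !).factorization p := by
  rw [Nat.factorization_factorial hp (b := n + 1) ((Nat.log_le_self p n).trans_lt n.lt_succ_self)]
  rcases n.eq_zero_or_pos with rfl | hn
  · simp
  simpa using single_le_sum (f := fun i => n / p ^ i) (fun _ _ => Nat.zero_le _)
    (mem_Ico.2 ⟨le_rfl, by omega⟩ : 1 ∈ Ico 1 (n + 1))

lemma log_factorial_le {n : ℕ} (hn : n ≠ 0) :
    log (n ! : ℝ) ≤ n * log n - n + log n / 2 + 1 := by
  obtain ⟨k, rfl⟩ := Nat.exists_eq_succ_of_ne_zero hn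
  have hanti : Stirling.stirlingSeq (k + 1) ≤ Stirling.stirlingSeq 1 :=
    Stirling.stirlingSeq'_antitone (Nat.zero_le k)
  have hlog := log_le_log (Stirling.stirlingSeq'_pos k) hanti
  rw [Stirling.log_stirlingSeq_formula, Stirling.stirlingSeq_one,
    log_div (exp_pos 1).ne' (by positivity), log_exp, log_sqrt zero_le_two,
    log_mul two_ne_zero (by positivity), log_div (by positivity) (exp_pos 1).ne', log_exp] at hlog
  linarith

lemma mul_log_succ_sub_le_log_factorial (n : ℕ) : n * log (n + 1) - n ≤ log (n ! : ℝ) := by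
  induction n with
  | zero => simp
  | succ n ih =>
    have hn : (0 : ℝ) < n + 1 := by positivity
    have hstep : log ((n + 1 + 1) / (n + 1)) ≤ (n + 1 + 1) / (n + 1) - 1 :=
      log_le_sub_one_of_pos (by positivity)
    rw [log_div (by positivity) hn.ne', show ((n : ℝ) + 1 + 1) / (n + 1) - 1 = 1 / (n + 1) by
      field_simp; ring] at hstep
    have := mul_le_mul_of_nonneg_left hstep hn.le
    rw [mul_one_div_cancel hn.ne'] at this
    rw [Nat.factorial_succ, Nat.cast_mul, Nat.cast_succ,
      log_mul hn.ne' (by exact_mod_cast (Nat.factorial_pos n).ne')]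
    nlinarith

lemma log_div_mul_sub_one_le_sub {n : ℕ} (hn : 4 ≤ n) :
    log (n + 1 : ℕ) / ((n + 1 : ℕ) * ((n + 1 : ℕ) - 1)) ≤
      (log n + 5 / 4) / n - (log (n + 1 : ℕ) + 5 / 4) / (n + 1 : ℕ) := by
  have hy : (4 : ℝ) ≤ n := mod_cast hn
  have hn0 : (n : ℝ) ≠ 0 := by positivity
  push_cast
  have hlog : -(1 / n) ≤ log n - log (n + 1) := by
    have h := one_sub_inv_le_log_of_pos (show (0 : ℝ) < n / (n + 1) by positivity)
    rw [log_div (by positivity) (by positivity), inv_div] at h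
    have : 1 - ((n : ℝ) + 1) / n = -(1 / n) := by field_simp; ring
    linarith
  have hkey : -(5 / 4) ≤ (n + 1) * (log n - log (n + 1)) := by
    have := mul_le_mul_of_nonneg_left hlog (by positivity : (0 : ℝ) ≤ n + 1)
    have : ((n : ℝ) + 1) * -(1 / n) ≥ -(5 / 4) := by
      rw [ge_iff_le, mul_neg, neg_le_neg_iff, mul_one_div, div_le_iff₀ (by positivity)]
      linarith
    linarith
  rw [← sub_nonneg]
  have e : (log n + 5 / 4) / n - (log (n + 1) + 5 / 4) / (n + 1) -
      log (n + 1) / ((n + 1) * (n + 1 - 1)) =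
        ((n + 1) * (log n - log (n + 1)) + 5 / 4) / (n * (n + 1)) := by
    rw [add_sub_cancel_right]
    field_simp
    ring
  rw [e]
  apply div_nonneg (by linarith) (by positivity)

lemma sum_log_div_mul_sub_one_le (n : ℕ) :
    ∑ p ∈ n.primesLE, log p / (p * (p - 1)) ≤ 1.19 := by
  set f : ℕ → ℝ := fun k => log k / (k * (k - 1))
  set g : ℕ → ℝ := fun k => (log k + 5 / 4) / k
  have hf : ∀ k, 0 ≤ f k := fun k => by
    rcases k with _ | k
    · simp [f]
    · apply div_nonneg (log_natCast_nonneg _)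
      push_cast
      nlinarith
  have htele : ∀ n, 4 ≤ n → ∑ k ∈ Ioc 4 n, f k ≤ g 4 - g n := by
    intro n hn
    induction n, hn using Nat.le_induction with
    | base => simp
    | succ n hn ih =>
      rw [sum_Ioc_succ_top (by omega)]
      linarith [log_div_mul_sub_one_le_sub hn]
  have hsmall : ∑ k ∈ Ioc 4 n, f k ≤ g 4 := by
    rcases le_or_gt 4 n with hn | hn
    · have : 0 ≤ g n := by positivity
      linarith [htele n hn]
    · rw [Ioc_eq_empty (by omega), sum_empty]
      positivity
  have hsub : n.primesLE ⊆ {2, 3} ∪ Ioc 4 n := by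
    intro p hp
    obtain ⟨hpn, hp⟩ := Nat.mem_primesLE.1 hp
    have := hp.two_le
    have : p ≠ 4 := by rintro rfl; norm_num at hp
    simp only [mem_union, mem_insert, mem_singleton, mem_Ioc]
    omega
  have hdisj : Disjoint ({2, 3} : Finset ℕ) (Ioc 4 n) := by
    rw [disjoint_left]; simp only [mem_insert, mem_singleton, mem_Ioc]; omega
  have h2 := Real.log_two_lt_d9
  have h3 := Real.log_three_lt_d9
  calc ∑ p ∈ n.primesLE, f p ≤ ∑ k ∈ {2, 3} ∪ Ioc 4 n, f k :=
        sum_le_sum_of_subset_of_nonneg hsub fun k _ _ => hf k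
    _ ≤ f 2 + f 3 + g 4 := by rw [sum_union hdisj, sum_pair (by norm_num)]; linarith
    _ ≤ 1.19 := by
      norm_num [f, g, Real.log_four_eq]
      linarith

noncomputable def primeLogSum (n : ℕ) : ℝ := ∑ p ∈ n.primesLE, log p / p

lemma mul_primeLogSum_le (n : ℕ) : n * primeLogSum n ≤ log (n ! : ℝ) + n * log 4 := by
  have hterm : ∀ p ∈ n.primesLE,
      n * (log p / p) ≤ (n !).factorization p * log p + log p := by
    intro p hp
    have hp := Nat.prime_of_mem_primesLE hp
    have hp0 : (0 : ℝ) < p := mod_cast hp.pos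
    have hfloor : (n : ℝ) / p ≤ (n / p : ℕ) + 1 := by
      rw [← Nat.floor_div_eq_div (K := ℝ)]
      exact (Nat.lt_floor_add_one _).le
    have hdiv : ((n / p : ℕ) : ℝ) ≤ (n !).factorization p :=
      mod_cast div_le_factorization_factorial hp n
    calc n * (log p / p) = n / p * log p := by ring
      _ ≤ ((n !).factorization p + 1) * log p := by
        exact mul_le_mul_of_nonneg_right (by linarith) (log_nonneg (by exact_mod_cast hp.one_lt.le))
      _ = _ := by ring
  calc n * primeLogSum n ≤ ∑ p ∈ n.primesLE, ((n !).factorization p * log p + log p) := by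
        rw [primeLogSum, mul_sum]; exact sum_le_sum hterm
    _ = log (n ! : ℝ) + Chebyshev.theta n := by
        rw [sum_add_distrib, log_factorial_eq_sum, Chebyshev.theta_eq_sum_primesLE_log]
    _ ≤ log (n ! : ℝ) + n * log 4 := by
        rw [mul_comm]; gcongr; exact Chebyshev.theta_le_log4_mul_x (Nat.cast_nonneg n)

lemma log_factorial_le_mul_primeLogSum (n : ℕ) :
    log (n ! : ℝ) ≤ n * primeLogSum n + 1.19 * n := by
  have hterm : ∀ p ∈ n.primesLE, (n !).factorization p * log p ≤
      n * (log p / p) + n * (log p / (p * (p - 1))) := by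
    intro p hp
    have hp := Nat.prime_of_mem_primesLE hp
    have hp1 : (1 : ℝ) < p := mod_cast hp.one_lt
    have hν : ((n !).factorization p : ℝ) ≤ n / (p - 1) := by
      calc ((n !).factorization p : ℝ) ≤ ((n / (p - 1) : ℕ) : ℝ) :=
            mod_cast Nat.factorization_factorial_le_div_pred hp n
        _ ≤ n / ((p - 1 : ℕ) : ℝ) := Nat.cast_div_le
        _ = n / (p - 1) := by rw [Nat.cast_pred hp.pos]
    calc (n !).factorization p * log p ≤ n / (p - 1) * log p :=
          mul_le_mul_of_nonneg_right hν (log_nonneg hp1.le)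
      _ = n * (log p / p) + n * (log p / (p * (p - 1))) := by
          have : (p : ℝ) - 1 ≠ 0 := by linarith
          have : (p : ℝ) ≠ 0 := by linarith
          field_simp
          ring
  calc log (n ! : ℝ)
      ≤ ∑ p ∈ n.primesLE, (n * (log p / p) + n * (log p / (p * (p - 1)))) := by
        rw [log_factorial_eq_sum]; exact sum_le_sum hterm
    _ = n * primeLogSum n + n * ∑ p ∈ n.primesLE, log p / (p * (p - 1)) := by
        rw [sum_add_distrib, ← mul_sum, ← mul_sum, primeLogSum]
    _ ≤ n * primeLogSum n + 1.19 * n := by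
        nlinarith [sum_log_div_mul_sub_one_le n, (Nat.cast_nonneg n : (0 : ℝ) ≤ n)]

lemma primeLogSum_four : primeLogSum 4 = log 2 / 2 + log 3 / 3 := by
  rw [primeLogSum, show Nat.primesLE 4 = {2, 3} by decide, sum_pair (by norm_num)]
  norm_num

lemma primeLogSum_le_log_add_primeLogSum_four {n : ℕ} (hn : 4 ≤ n) :
    primeLogSum n ≤ log n + primeLogSum 4 := by
  rcases (show n = 4 ∨ n = 5 ∨ 6 ≤ n by omega) with rfl | rfl | hn
  · linarith [log_natCast_nonneg 4]
  · have : primeLogSum 5 = log 5 / 5 + primeLogSum 4 := by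
      rw [primeLogSum, primeLogSum, Nat.primesLE_succ 4, if_pos (by norm_num),
        sum_insert (Nat.notMem_primesLE 4)]
      norm_num
    have := Real.log_pos (by norm_num : (1 : ℝ) < 5)
    push_cast
    linarith
  have hx : (6 : ℝ) ≤ n := mod_cast hn
  -- the tangent line of `log` at `8`
  have htan : log n ≤ 3 * log 2 - 1 + n / 8 := by
    have h := log_le_sub_one_of_pos (show (0 : ℝ) < n / 8 by positivity)
    rw [log_div (by positivity) (by norm_num), show (8 : ℝ) = 2 ^ 3 by norm_num, log_pow] at h
    push_cast at h
    linarith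
  have h2 : n * log 2 ≤ n * 0.6931471808 :=
    mul_le_mul_of_nonneg_left Real.log_two_lt_d9.le (by positivity)
  have h3 : n * 1.0986122885 ≤ n * log 3 :=
    mul_le_mul_of_nonneg_left Real.log_three_gt_d9.le (by positivity)
  have hfact := log_factorial_le (n := n) (by omega)
  have hmul := mul_primeLogSum_le n
  rw [primeLogSum_four, Real.log_four_eq] at *
  refine le_of_mul_le_mul_left ?_ (by positivity : (0 : ℝ) < n)
  linarith [Real.log_two_lt_d9, show (n : ℝ) * (log n + (log 2 / 2 + log 3 / 3)) =
    n * log n + n * log 2 / 2 + n * log 3 / 3 by ring]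

lemma log_succ_sub_le_primeLogSum (n : ℕ) : log (n + 1) - 2.19 ≤ primeLogSum n := by
  rcases n.eq_zero_or_pos with rfl | hn
  · simp [primeLogSum]; norm_num
  refine le_of_mul_le_mul_left ?_ (by positivity : (0 : ℝ) < n)
  linarith [mul_log_succ_sub_le_log_factorial n, log_factorial_le_mul_primeLogSum n]

lemma primeLogSum_mono : Monotone primeLogSum := fun _ _ h =>
  sum_le_sum_of_subset_of_nonneg (Nat.primesLE_mono h) fun _ _ _ =>
    div_nonneg (log_natCast_nonneg _) (Nat.cast_nonneg _)

lemma sum_Ioc_eq_primeLogSum_sub {m n : ℕ} (h : m ≤ n) :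
    ∑ k ∈ Ioc m n, (if k.Prime then log k / k else 0) = primeLogSum n - primeLogSum m := by
  simp only [primeLogSum, Nat.primesLE_eq_filter_Ioc_zero, sum_filter]
  rw [← sum_Ioc_consecutive _ (Nat.zero_le m) h]
  ring

noncomputable def primeWindow (w z : ℝ) : Finset ℕ :=
  (Finset.range ⌈z⌉₊).filter (fun p : ℕ => p.Prime ∧ w ≤ (p : ℝ) ∧ (p : ℝ) < z)

lemma primeWindow_eq_filter_Ioc {w : ℝ} (hw : 0 < w) (z : ℝ) :
    primeWindow w z = (Ioc (⌈w⌉₊ - 1) (⌈z⌉₊ - 1)).filter Nat.Prime := by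
  have := Nat.ceil_pos.2 hw
  ext p
  simp only [primeWindow, mem_filter, mem_range, mem_Ioc, ← Nat.ceil_le, ← Nat.lt_ceil]
  constructor
  · rintro ⟨-, hp, hwp, hpz⟩; exact ⟨⟨by omega, by omega⟩, hp⟩
  · rintro ⟨⟨hwp, hpz⟩, hp⟩; exact ⟨by omega, hp, by omega, by omega⟩

lemma primeWindow_eq_max_five {w : ℝ} (hw : 3 < w) (z : ℝ) :
    primeWindow w z = primeWindow (max w 5) z := by
  ext p
  simp only [primeWindow, mem_filter, max_le_iff]
  refine ⟨fun ⟨hpz, hp, hwp, hpz'⟩ => ⟨hpz, hp, ⟨hwp, ?_⟩, hpz'⟩,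
    fun ⟨hpz, hp, ⟨hwp, _⟩, hpz'⟩ => ⟨hpz, hp, hwp, hpz'⟩⟩
  have : 3 < p := by exact_mod_cast hw.trans_le hwp
  have : p ≠ 4 := by rintro rfl; norm_num at hp
  exact_mod_cast (show 5 ≤ p by omega)

lemma primeWindow_eq_empty {w z : ℝ} (h : z ≤ w) : primeWindow w z = ∅ :=
  filter_eq_empty_iff.2 fun _ _ ⟨_, hwp, hpz⟩ => (hwp.trans_lt hpz).not_ge h

lemma sum_primeWindow_one_div_eq {w : ℝ} (hw : 0 < w) (z : ℝ) :
    ∑ p ∈ primeWindow w z, (1 : ℝ) / p =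
      ∑ k ∈ Ioc (⌈w⌉₊ - 1) (⌈z⌉₊ - 1),
        (if k.Prime then log k / k else 0) / log k := by
  rw [primeWindow_eq_filter_Ioc hw, sum_filter]
  refine sum_congr rfl fun k _ => ?_
  split_ifs with hk
  · have : log (k : ℝ) ≠ 0 := (log_pos (by exact_mod_cast hk.one_lt)).ne'
    field_simp
  · simp

lemma sum_primeWindow_inv_le {w z : ℝ} (hw : 5 ≤ w) (hwz : w ≤ z) :
    ∑ p ∈ primeWindow w z, (1 : ℝ) / p ≤ log (log z) - log (log w) + 1 -
      (primeLogSum (⌈w⌉₊ - 1) - primeLogSum 4) / log w := by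
  set m := ⌈w⌉₊ - 1
  set N := ⌈z⌉₊ - 1
  set ℓ := primeLogSum m - primeLogSum 4
  have hm4 : 4 ≤ m := by
    have : 4 < ⌈w⌉₊ := Nat.lt_ceil.2 (by norm_num; linarith)
    omega
  have hm1 : ((m + 1 : ℕ) : ℝ) = ⌈w⌉₊ := by norm_cast; omega
  have hmw : (m : ℝ) ≤ w := by
    linarith [Nat.ceil_lt_add_one (show 0 ≤ w by linarith), show (m : ℝ) + 1 = ⌈w⌉₊ by
      exact_mod_cast hm1]
  have hLw : 0 < log w := log_pos (by linarith)
  have hℓ : ℓ ≤ log w := by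
    have := primeLogSum_le_log_add_primeLogSum_four hm4
    have := log_le_log (by exact_mod_cast (by omega : 0 < m)) hmw
    linarith
  rcases le_or_gt N m with hNm | hmN
  · rw [primeWindow_eq_filter_Ioc (by linarith), Ioc_eq_empty (by omega), filter_empty, sum_empty]
    have := log_le_log (log_pos (by linarith)) (log_le_log (by linarith) hwz)
    have : ℓ / log w ≤ 1 := (div_le_one hLw).2 hℓ
    linarith
  have hN : (N : ℝ) ≤ z := by
    have : (N : ℝ) + 1 = ⌈z⌉₊ := by norm_cast; omega
    linarith [Nat.ceil_lt_add_one (show 0 ≤ z by linarith)]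
  have habel := sum_Ioc_div_log_le (fun k => if k.Prime then log k / k else 0) ℓ
    (by omega : 1 ≤ m) hmN fun n hn => by
      rw [mem_Ioc] at hn
      rw [sum_Ioc_eq_primeLogSum_sub hn.1.le]
      linarith [primeLogSum_le_log_add_primeLogSum_four (by omega : 4 ≤ n)]
  have hloglog : log (log N) ≤ log (log z) :=
    log_le_log (log_pos (by exact_mod_cast (by omega : 1 < N)))
      (log_le_log (by exact_mod_cast (by omega : 0 < N)) hN)
  have hbase := log_log_add_div_log_le (by linarith) (hm1 ▸ Nat.le_ceil w) hℓ
  rw [sum_primeWindow_one_div_eq (by linarith)]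
  linarith

lemma log_sub_le_primeLogSum_ceil_sub_one {w : ℝ} (hw : 1 < w) :
    log w - 2.91 ≤ primeLogSum (⌈w⌉₊ - 1) - primeLogSum 4 := by
  have hceil : 1 ≤ ⌈w⌉₊ := Nat.one_le_iff_ne_zero.2 (Nat.ceil_pos.2 (by linarith)).ne'
  have h1 := log_succ_sub_le_primeLogSum (⌈w⌉₊ - 1)
  have h2 : w ≤ ((⌈w⌉₊ - 1 : ℕ) : ℝ) + 1 := by
    rw [Nat.cast_sub hceil, Nat.cast_one, sub_add_cancel]; exact Nat.le_ceil w
  have h3 := log_le_log (by linarith) h2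
  have : primeLogSum 4 ≤ 0.72 := by
    rw [primeLogSum_four]; linarith [Real.log_two_lt_d9, Real.log_three_lt_d9]
  linarith

lemma sum_primeWindow_inv_sub_two_sub_inv_le {w : ℝ} (hw : 2 < w) (z : ℝ) :
    ∑ p ∈ primeWindow w z, (1 / ((p : ℝ) - 2) - 1 / p) ≤ 1 / (w - 2) := by
  rcases le_or_gt z w with hz | hz
  · rw [primeWindow_eq_empty hz, sum_empty]
    exact (one_div_pos.2 (by linarith)).le
  refine (sum_inv_sub_two_sub_inv_le (y := z) hw (fun p hp => ?_) (by linarith)).trans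
    (by linarith [one_div_pos.2 (show 0 < z by linarith)])
  obtain ⟨hp, hwp, hpz⟩ := (mem_filter.1 hp).2
  exact ⟨hp.odd_of_ne_two (by rintro rfl; norm_num at hwp; linarith), hwp, hpz.le⟩

lemma exp_le_of_mul_eq {x c : ℝ} {j k : ℕ} (hk : k ≠ 0) (hc : 0 ≤ c) (hx : k * x = j)
    (h : (2.7182818286 : ℝ) ^ j ≤ c ^ k) : exp x ≤ c := by
  refine le_of_pow_le_pow_left₀ hk hc ?_
  calc exp x ^ k = exp 1 ^ j := by rw [← exp_nat_mul, ← exp_nat_mul, hx, mul_one]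
    _ ≤ 2.7182818286 ^ j := pow_le_pow_left₀ (exp_pos 1).le exp_one_lt_d9.le j
    _ ≤ c ^ k := h

lemma exp_mul_le_one_add_mul {a b t t₀ : ℝ} (ht : 0 ≤ t) (htt₀ : t ≤ t₀)
    (h : exp (a * t₀) ≤ 1 + b * t₀) : exp (a * t) ≤ 1 + b * t := by
  rcases ht.eq_or_lt with rfl | ht
  · simp
  have ht₀ : 0 < t₀ := ht.trans_le htt₀
  have hs : 0 ≤ t / t₀ := by positivity
  have hs1 : 0 ≤ 1 - t / t₀ := by rw [sub_nonneg, div_le_one ht₀]; exact htt₀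
  have := convexOn_exp.2 (Set.mem_univ (a * t₀)) (Set.mem_univ 0) hs hs1 (by ring)
  simp only [smul_eq_mul, mul_zero, add_zero, exp_zero, mul_one] at this
  rw [show t / t₀ * (a * t₀) = a * t by field_simp] at this
  calc exp (a * t) ≤ t / t₀ * exp (a * t₀) + (1 - t / t₀) := this
    _ ≤ t / t₀ * (1 + b * t₀) + (1 - t / t₀) := by gcongr
    _ = 1 + b * t := by field_simp; ring

lemma exp_one_sub_div_log_add_inv_le_of_mem_Icc {a b c d w ℓ : ℝ} (ha : 2 < a) (haw : a ≤ w)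
    (hwb : w ≤ b) (hℓ : 0 ≤ ℓ) (hc : exp (1 + 1 / (a - 2)) ≤ c) (hd : log b ≤ d)
    (hcd : c ≤ 1 + 6 / d) : exp (1 - ℓ / log w + 1 / (w - 2)) ≤ 1 + 6 / log w := by
  have hLw : 0 < log w := log_pos (by linarith)
  have hLb : log w ≤ log b := log_le_log (by linarith) hwb
  calc exp (1 - ℓ / log w + 1 / (w - 2)) ≤ exp (1 + 1 / (a - 2)) := by
        gcongr
        linarith [div_nonneg hℓ hLw.le]
    _ ≤ 1 + 6 / d := hc.trans hcd
    _ ≤ 1 + 6 / log w := by gcongr; linarith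

lemma exp_one_sub_div_log_add_inv_le_of_lt_seventeen {w ℓ : ℝ} (hw : 5 ≤ w) (hw17 : w < 17)
    (hℓ : 0 ≤ ℓ) : exp (1 - ℓ / log w + 1 / (w - 2)) ≤ 1 + 6 / log w := by
  have h2 := Real.log_two_lt_d9
  have h3 := Real.log_three_lt_d9
  rcases lt_or_ge w 7 with hw7 | hw7
  · refine exp_one_sub_div_log_add_inv_le_of_mem_Icc (a := 5) (b := 8) (c := 3.85) (d := 2.0795)
      (by norm_num) hw (by linarith) hℓ
      (exp_le_of_mul_eq (j := 4) (k := 3) (by norm_num) (by norm_num) (by norm_num) (by norm_num))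
      ?_ (by norm_num)
    rw [show (8 : ℝ) = 2 ^ 3 by norm_num, log_pow]; push_cast; linarith
  rcases lt_or_ge w 11 with hw11 | hw11
  · refine exp_one_sub_div_log_add_inv_le_of_mem_Icc (a := 7) (b := 12) (c := 3.4) (d := 2.485)
      (by norm_num) hw7 (by linarith) hℓ
      (exp_le_of_mul_eq (j := 6) (k := 5) (by norm_num) (by norm_num) (by norm_num) (by norm_num))
      ?_ (by norm_num)
    rw [show (12 : ℝ) = 2 ^ 2 * 3 by norm_num, log_mul (by norm_num) (by norm_num), log_pow]
    push_cast; linarith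
  · refine exp_one_sub_div_log_add_inv_le_of_mem_Icc (a := 11) (b := 18) (c := 3.05)
      (d := 2.8904) (by norm_num) hw11 (by linarith) hℓ
      (exp_le_of_mul_eq (j := 10) (k := 9) (by norm_num) (by norm_num) (by norm_num) (by norm_num))
      ?_ (by norm_num)
    rw [show (18 : ℝ) = 2 * 3 ^ 2 by norm_num, log_mul (by norm_num) (by norm_num), log_pow]
    push_cast; linarith

lemma exp_one_sub_div_log_add_inv_le_of_seventeen_le {w ℓ : ℝ} (hw : 17 ≤ w)
    (hℓ : log w - 2.91 ≤ ℓ) : exp (1 - ℓ / log w + 1 / (w - 2)) ≤ 1 + 6 / log w := by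
  have hLw : 2.772 ≤ log w := by
    have : log 16 = 4 * log 2 := by rw [show (16 : ℝ) = 2 ^ 4 by norm_num, log_pow]; norm_num
    linarith [Real.log_two_gt_d9,
      log_le_log (by norm_num : (0 : ℝ) < 16) (by linarith : 16 ≤ w)]
  have hL : 0 < log w := by linarith
  -- the tangent line of `log` at `17`
  have htan : log w ≤ 0.2 * (w - 2) := by
    have h := log_le_sub_one_of_pos (show 0 < w / 17 by positivity)
    rw [log_div (by positivity) (by norm_num)] at h
    have : log 17 ≤ log 18 := log_le_log (by norm_num) (by norm_num)
    have : log 18 = log 2 + 2 * log 3 := by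
      rw [show (18 : ℝ) = 2 * 3 ^ 2 by norm_num, log_mul (by norm_num) (by norm_num), log_pow]
      push_cast; ring
    linarith [Real.log_two_lt_d9, Real.log_three_lt_d9]
  have hexp : 1 - ℓ / log w + 1 / (w - 2) ≤ 3.11 * (1 / log w) := by
    have h1 : 1 / (w - 2) ≤ 0.2 / log w := by
      rw [div_le_div_iff₀ (by linarith) hL]; linarith
    have h2 : 1 - ℓ / log w ≤ 2.91 / log w := by
      have : 2.91 / log w - (1 - ℓ / log w) = (ℓ - (log w - 2.91)) / log w := by
        field_simp; ring
      linarith [div_nonneg (by linarith : 0 ≤ ℓ - (log w - 2.91)) hL.le]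
    linarith [show 3.11 * (1 / log w) = 2.91 / log w + 0.2 / log w by ring]
  have hconv : exp (3.11 * (1 / log w)) ≤ 1 + 6 * (1 / log w) := by
    refine exp_mul_le_one_add_mul (t₀ := 0.361) (by positivity) ?_ ?_
    · rw [div_le_iff₀ hL]; linarith
    · have : exp (9 / 8) ≤ 3.1 :=
        exp_le_of_mul_eq (j := 9) (k := 8) (by norm_num) (by norm_num) (by norm_num) (by norm_num)
      have : exp (3.11 * 0.361) ≤ exp (9 / 8) := exp_le_exp.2 (by norm_num)
      linarith
  calc exp (1 - ℓ / log w + 1 / (w - 2)) ≤ exp (3.11 * (1 / log w)) := exp_le_exp.2 hexp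
    _ ≤ 1 + 6 / log w := by rw [← mul_one_div 6]; exact hconv

lemma prod_primeWindow_le (m : ℕ) {w z : ℝ} (hw : 5 ≤ w) (hwz : w ≤ z) :
    ∏ p ∈ primeWindow w z, (1 - omega1 m p / p)⁻¹ ≤ (log z / log w) * (1 + 6 / log w) := by
  set ℓ := primeLogSum (⌈w⌉₊ - 1) - primeLogSum 4
  have hℓ₀ : 0 ≤ ℓ := sub_nonneg.2 (primeLogSum_mono (by
    have : 4 < ⌈w⌉₊ := Nat.lt_ceil.2 (by norm_num; linarith)
    omega))
  have hnum : exp (1 - ℓ / log w + 1 / (w - 2)) ≤ 1 + 6 / log w := by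
    rcases lt_or_ge w 17 with hw17 | hw17
    · exact exp_one_sub_div_log_add_inv_le_of_lt_seventeen hw hw17 hℓ₀
    · exact exp_one_sub_div_log_add_inv_le_of_seventeen_le hw17
        (log_sub_le_primeLogSum_ceil_sub_one (by linarith))
  have hsum : ∑ p ∈ primeWindow w z, 1 / ((p : ℝ) - 2) ≤
      (log (log z) - log (log w)) + (1 - ℓ / log w + 1 / (w - 2)) := by
    have := sum_primeWindow_inv_le hw hwz
    have := sum_primeWindow_inv_sub_two_sub_inv_le (by linarith : (2 : ℝ) < w) z
    rw [sum_sub_distrib] at this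
    linarith
  calc ∏ p ∈ primeWindow w z, (1 - omega1 m p / p)⁻¹
      ≤ exp (∑ p ∈ primeWindow w z, 1 / ((p : ℝ) - 2)) :=
        prod_inv_one_sub_omega1_div_le_exp m fun p hp => by
          obtain ⟨hp, hwp, -⟩ := (mem_filter.1 hp).2
          exact ⟨hp, by exact_mod_cast (show (3 : ℝ) ≤ p by linarith)⟩
    _ ≤ exp (log (log z) - log (log w)) * exp (1 - ℓ / log w + 1 / (w - 2)) := by
        rw [← exp_add]; exact exp_le_exp.2 hsum
    _ ≤ (log z / log w) * (1 + 6 / log w) := by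
        have hLw : 0 < log w := log_pos (by linarith)
        have hLz : 0 < log z := log_pos (by linarith)
        rw [exp_sub, exp_log hLz, exp_log hLw]
        gcongr

theorem omega1_euler_product_bound_general (m : ℕ) (w z₀ : ℝ)
    (hw : 3 < w) (hwz : w ≤ z₀) :
    ∏ p ∈ (Finset.range ⌈z₀⌉₊).filter
        (fun p : ℕ => p.Prime ∧ w ≤ (p : ℝ) ∧ (p : ℝ) < z₀),
      (1 - omega1 m p / p)⁻¹ ≤
    (Real.log z₀ / Real.log w) * (1 + 6 / Real.log w) := by
  change ∏ p ∈ primeWindow w z₀, _ ≤ _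
  have hLw : 0 < log w := log_pos (by linarith)
  have hLz : log w ≤ log z₀ := log_le_log (by linarith) hwz
  have hLw5 : log w ≤ log (max w 5) := log_le_log (by linarith) (le_max_left w 5)
  rw [primeWindow_eq_max_five hw]
  rcases lt_or_ge z₀ (max w 5) with hz | hz
  · rw [primeWindow_eq_empty hz.le, prod_empty]
    have : 1 ≤ log z₀ / log w := (one_le_div hLw).2 hLz
    have : 1 ≤ 1 + 6 / log w := by simp only [le_add_iff_nonneg_right]; positivity
    nlinarith
  · have : 0 ≤ log z₀ := log_nonneg (by linarith)
    refine (prod_primeWindow_le m (le_max_right w 5) hz).trans ?_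
    gcongr
    have : 0 < log (max w 5) := hLw.trans_le hLw5
    positivity

/-- **Mertens-type bound for the sieve density `ω₁`.** For a positive integer `m` and
reals `3 < w ≤ z₀`, the product over primes `w ≤ p < z₀` of `(1 − ω₁(m,p)/p)⁻¹` is at
most `(log z₀ / log w)(1 + 6/log w)`. -/
theorem omega1_euler_product_bound (m : ℕ) (hm : 0 < m) (w z₀ : ℝ)
    (hw : 3 < w) (hwz : w ≤ z₀) :
    ∏ p ∈ (Finset.range ⌈z₀⌉₊).filter
        (fun p : ℕ => p.Prime ∧ w ≤ (p : ℝ) ∧ (p : ℝ) < z₀),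
      (1 - omega1 m p / p)⁻¹ ≤
    (Real.log z₀ / Real.log w) * (1 + 6 / Real.log w) :=
  omega1_euler_product_bound_general m w z₀ hw hwz
end
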